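/- arXiv:2404.11460 — 7 statements merged into one kernel-verified Lean document; each statement's English description precedes it below -/
import Mathlib

section
/- Every trapezoid is n-self-affine for every integer n ≥ 2; that is, for every trapezoid T ⊆ ℝ² and every n ≥ 2 there exist invertible affine maps φ₁, …, φₙ : ℝ² → ℝ² such that the images φ₁(T), …, φₙ(T) form a dissection of T. -/
/-!
Cut a trapezoid with parallel sides of lengths `ℓ` and `tℓ` by the `n - 1` segments that join
corresponding points of the subdivisions of these two sides into `n` equal parts. Each of the `n`
slices is a trapezoid whose parallel sides have lengths `ℓ / n` and `tℓ / n`, in the same ratio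
`t`, and two trapezoids with the same ratio of parallel sides are affinely equivalent: sending
three vertices to three vertices fixes an affine map, which then also matches the fourth vertex.
In coordinates, every trapezoid is the affine image of the standard trapezoid with vertices
`(0, 0), (1, 0), (t, 1), (0, 1)`, where `t > 0` because the diagonals cross.
-/

open Set

/-- A compact set `P ⊆ ℝ²` is `n`-self-affine if there are invertible affine maps
`φ₁, …, φₙ` such that `P = φ₁(P) ∪ ⋯ ∪ φₙ(P)` and the interiors of the `φᵢ(P)`
are pairwise disjoint. -/
def IsSelfAffine (n : ℕ) (P : Set (ℝ × ℝ)) : Prop :=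
  ∃ φ : Fin n → ((ℝ × ℝ) ≃ᵃ[ℝ] (ℝ × ℝ)),
    (⋃ i, φ i '' P) = P ∧
    Pairwise fun i j => Disjoint (interior (φ i '' P)) (interior (φ j '' P))

/-- A convex quadrangle is the convex hull of four points of `ℝ²`, none of which lies
in the convex hull of the other three. -/
def IsConvexQuadrangle (Q : Set (ℝ × ℝ)) : Prop :=
  ∃ a b c d : ℝ × ℝ,
    Q = convexHull ℝ {a, b, c, d} ∧
    a ∉ convexHull ℝ ({b, c, d} : Set (ℝ × ℝ)) ∧
    b ∉ convexHull ℝ ({a, c, d} : Set (ℝ × ℝ)) ∧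
    c ∉ convexHull ℝ ({a, b, d} : Set (ℝ × ℝ)) ∧
    d ∉ convexHull ℝ ({a, b, c} : Set (ℝ × ℝ))

/-- A trapezoid is a convex quadrangle having at least one pair of parallel opposite
sides.  The vertices `a, b, c, d` are in cyclic order (expressed by the crossing of the
diagonals `ac` and `bd`), so the sides are `ab`, `bc`, `cd`, `da`, and a pair of
opposite sides is parallel iff `c - d` is a multiple of `b - a` or `a - d` is a multiple
of `c - b`.  Parallelograms count as trapezoids. -/
def IsTrapezoid (Q : Set (ℝ × ℝ)) : Prop :=
  ∃ a b c d : ℝ × ℝ,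
    Q = convexHull ℝ {a, b, c, d} ∧
    a ∉ convexHull ℝ ({b, c, d} : Set (ℝ × ℝ)) ∧
    b ∉ convexHull ℝ ({a, c, d} : Set (ℝ × ℝ)) ∧
    c ∉ convexHull ℝ ({a, b, d} : Set (ℝ × ℝ)) ∧
    d ∉ convexHull ℝ ({a, b, c} : Set (ℝ × ℝ)) ∧
    (segment ℝ a c ∩ segment ℝ b d).Nonempty ∧
    ((∃ t : ℝ, c - d = t • (b - a)) ∨ (∃ t : ℝ, a - d = t • (c - b)))

def cross (u v : ℝ × ℝ) : ℝ := u.1 * v.2 - u.2 * v.1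

theorem exists_eq_smul_of_cross_eq_zero {u v : ℝ × ℝ} (hu : u ≠ 0) (h : cross u v = 0) :
    ∃ s : ℝ, v = s • u := by
  unfold cross at h
  by_cases h1 : u.1 = 0
  · have h2 : u.2 ≠ 0 := fun h2 => hu (Prod.ext h1 h2)
    refine ⟨v.2 / u.2, Prod.ext ?_ ?_⟩ <;>
      simp only [Prod.smul_fst, Prod.smul_snd, smul_eq_mul] <;> field_simp
    linear_combination -h
  · refine ⟨v.1 / u.1, Prod.ext ?_ ?_⟩ <;>
      simp only [Prod.smul_fst, Prod.smul_snd, smul_eq_mul] <;> field_simp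
    linear_combination h

theorem cross_sub_ne_zero {a b d : ℝ × ℝ} (ha : a ∉ segment ℝ b d) (hb : b ∉ segment ℝ a d)
    (hd : d ∉ segment ℝ a b) : cross (b - a) (d - a) ≠ 0 := by
  intro h
  have hba : b - a ≠ 0 := fun h0 => hb (sub_eq_zero.1 h0 ▸ left_mem_segment ℝ a d)
  obtain ⟨s, hs⟩ := exists_eq_smul_of_cross_eq_zero hba h
  have hcol : Collinear ℝ ({d, a, b} : Set (ℝ × ℝ)) := by
    refine collinear_insert_of_mem_affineSpan_pair ?_
    convert smul_vsub_vadd_mem_affineSpan_pair s a b using 1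
    rw [vsub_eq_sub, vadd_eq_add, ← hs, sub_add_cancel]
  rcases hcol.wbtw_or_wbtw_or_wbtw with h | h | h
  · exact ha (segment_symm ℝ b d ▸ h.mem_segment)
  · exact hb h.mem_segment
  · exact hd (segment_symm ℝ a b ▸ h.mem_segment)

noncomputable def frameLinearEquiv (u v : ℝ × ℝ) (h : cross u v ≠ 0) :
    (ℝ × ℝ) ≃ₗ[ℝ] (ℝ × ℝ) where
  toFun p := p.1 • u + p.2 • v
  invFun q := (cross q v / cross u v, cross u q / cross u v)
  map_add' p q := by simp only [Prod.fst_add, Prod.snd_add, add_smul]; abel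
  map_smul' r p := by simp only [Prod.smul_fst, Prod.smul_snd, RingHom.id_apply]; module
  left_inv p := by
    ext <;> simp only [div_eq_iff h] <;>
      simp only [cross, Prod.fst_add, Prod.snd_add, Prod.smul_fst, Prod.smul_snd, smul_eq_mul] <;>
      ring
  right_inv q := by
    ext <;> simp only [Prod.fst_add, Prod.snd_add, Prod.smul_fst, Prod.smul_snd, smul_eq_mul] <;>
      field_simp <;> simp only [cross] <;> ring

noncomputable def frameAffineEquiv (o u v : ℝ × ℝ) (h : cross u v ≠ 0) :
    (ℝ × ℝ) ≃ᵃ[ℝ] (ℝ × ℝ) :=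
  (frameLinearEquiv u v h).toAffineEquiv.trans (AffineEquiv.constVAdd ℝ (ℝ × ℝ) o)

@[simp]
theorem frameAffineEquiv_apply (o u v : ℝ × ℝ) (h : cross u v ≠ 0) (p : ℝ × ℝ) :
    frameAffineEquiv o u v h p = o + (p.1 • u + p.2 • v) :=
  rfl

theorem IsSelfAffine.image {n : ℕ} {P : Set (ℝ × ℝ)} (h : IsSelfAffine n P)
    (E : (ℝ × ℝ) ≃ᵃ[ℝ] (ℝ × ℝ)) : IsSelfAffine n (E '' P) := by
  obtain ⟨φ, hcover, hdisj⟩ := h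
  have himage : ∀ i, (E.symm.trans (φ i)).trans E '' (E '' P) = E '' (φ i '' P) := fun i => by
    rw [AffineEquiv.coe_trans, AffineEquiv.coe_trans, image_comp, image_comp,
      E.image_symm, preimage_image_eq _ E.injective]
  refine ⟨fun i => (E.symm.trans (φ i)).trans E, ?_, fun i j hij => ?_⟩
  · simp only [himage, ← image_iUnion, hcover]
  · have hE : ⇑E = E.toContinuousAffineEquiv.toHomeomorph := rfl
    dsimp only
    rw [himage, himage, hE, ← Homeomorph.image_interior, ← Homeomorph.image_interior]
    exact (disjoint_image_iff E.injective).2 (hdisj hij)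

theorem disjoint_interior_of_subset_halfSpaces {E : Type*} [AddCommGroup E] [TopologicalSpace E]
    [ContinuousAdd E] [Module ℝ E] [ContinuousSMul ℝ E] {f : E →L[ℝ] ℝ} (hf : f ≠ 0)
    {A B : Set E} {c : ℝ} (hA : A ⊆ {x | f x ≤ c}) (hB : B ⊆ {x | c ≤ f x}) :
    Disjoint (interior A) (interior B) := by
  have hA' : interior A ⊆ f ⁻¹' Iio c := by
    rw [← interior_Iic,
      (f.isOpenMap_of_ne_zero hf).preimage_interior_eq_interior_preimage f.continuous]
    exact interior_mono hA
  exact ((Iio_disjoint_Ici le_rfl).preimage f).mono hA' (interior_subset.trans hB)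

theorem exists_nat_lt_le_le_add_one {s : ℝ} {n : ℕ} (hn : 0 < n) (hs0 : 0 ≤ s) (hsn : s ≤ n) :
    ∃ k : ℕ, k < n ∧ (k : ℝ) ≤ s ∧ s ≤ k + 1 := by
  rcases hsn.lt_or_eq with hsn | rfl
  · exact ⟨⌊s⌋₊, (Nat.floor_lt hs0).2 hsn, Nat.floor_le hs0, (Nat.lt_floor_add_one s).le⟩
  · exact ⟨n - 1, by omega, by simp [Nat.cast_pred hn], by simp [Nat.cast_pred hn]⟩

def stdTrapezoid (t : ℝ) : Set (ℝ × ℝ) :=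
  {p | 0 ≤ p.2 ∧ p.2 ≤ 1 ∧ 0 ≤ p.1 ∧ p.1 ≤ 1 + (t - 1) * p.2}

theorem one_add_sub_one_mul_pos {t y : ℝ} (ht : 0 < t) (hy0 : 0 ≤ y) (hy1 : y ≤ 1) :
    0 < 1 + (t - 1) * y := by
  rcases hy1.lt_or_eq with hy1 | rfl
  · nlinarith [mul_nonneg ht.le hy0]
  · linarith

theorem convex_stdTrapezoid (t : ℝ) : Convex ℝ (stdTrapezoid t) := by
  rintro p ⟨hp1, hp2, hp3, hp4⟩ q ⟨hq1, hq2, hq3, hq4⟩ α β hα hβ hαβ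
  simp only [stdTrapezoid, mem_ofPred_eq, Prod.fst_add, Prod.snd_add, Prod.smul_fst,
    Prod.smul_snd, smul_eq_mul]
  refine ⟨by positivity, by nlinarith, by positivity, ?_⟩
  nlinarith [mul_le_mul_of_nonneg_left hp4 hα, mul_le_mul_of_nonneg_left hq4 hβ]

theorem convexHull_stdVertices {t : ℝ} (ht : 0 < t) :
    convexHull ℝ {(0, 0), (1, 0), (t, 1), (0, 1)} = stdTrapezoid t := by
  refine (convexHull_min ?_ (convex_stdTrapezoid t)).antisymm ?_
  · simp only [insert_subset_iff, singleton_subset_iff, stdTrapezoid, mem_ofPred_eq]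
    norm_num [ht.le]
  rintro ⟨x, y⟩ ⟨hy0, hy1, hx0, hx1⟩
  dsimp only at *
  have hw := one_add_sub_one_mul_pos ht hy0 hy1
  have hK := convex_convexHull ℝ ({(0, 0), (1, 0), (t, 1), (0, 1)} : Set (ℝ × ℝ))
  have hv : ∀ p ∈ ({(0, 0), (1, 0), (t, 1), (0, 1)} : Set (ℝ × ℝ)), p ∈ convexHull ℝ _ :=
    fun p hp => subset_convexHull ℝ _ hp
  -- `(x, y)` lies between the points at height `y` of the left and the right side
  have hleft : ((0 : ℝ), y) ∈ segment ℝ ((0 : ℝ), (0 : ℝ)) (0, 1) :=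
    ⟨1 - y, y, by linarith, hy0, by ring, by ext <;> simp⟩
  have hright : (1 + (t - 1) * y, y) ∈ segment ℝ ((1 : ℝ), (0 : ℝ)) (t, 1) :=
    ⟨1 - y, y, by linarith, hy0, by ring, by
      ext <;> simp only [Prod.smul_mk, smul_eq_mul, mul_one, mul_zero, Prod.mk_add_mk, zero_add]
      ring⟩
  have hmid : (x, y) ∈ segment ℝ ((0 : ℝ), y) (1 + (t - 1) * y, y) :=
    ⟨1 - x / (1 + (t - 1) * y), x / (1 + (t - 1) * y), by rw [sub_nonneg, div_le_one hw]; exact hx1,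
      by positivity, by ring, by
        ext <;> simp only [Prod.smul_mk, smul_eq_mul, mul_zero, Prod.mk_add_mk, zero_add] <;>
          field_simp; ring⟩
  exact hK.segment_subset (hK.segment_subset (hv _ (by simp)) (hv _ (by simp)) hleft)
    (hK.segment_subset (hv _ (by simp)) (hv _ (by simp)) hright) hmid

/-- For `k ∈ {0, …, n - 1}`, the slice of `stdTrapezoid t` between the segment from `(k / n, 0)`
to `(k t / n, 1)` and the segment from `((k + 1) / n, 0)` to `((k + 1) t / n, 1)`. -/
def stdSlice (t n k : ℝ) : Set (ℝ × ℝ) :=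
  {p | 0 ≤ p.2 ∧ p.2 ≤ 1 ∧
    k * (1 + (t - 1) * p.2) ≤ n * p.1 ∧ n * p.1 ≤ (k + 1) * (1 + (t - 1) * p.2)}

noncomputable def sliceEquiv (t : ℝ) {n : ℝ} (hn : n ≠ 0) (k : ℝ) : (ℝ × ℝ) ≃ᵃ[ℝ] (ℝ × ℝ) :=
  frameAffineEquiv (k / n, 0) (n⁻¹, 0) (k * (t - 1) / n, 1) (by simp [cross, hn])

theorem sliceEquiv_apply (t : ℝ) {n : ℝ} (hn : n ≠ 0) (k : ℝ) (p : ℝ × ℝ) :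
    sliceEquiv t hn k p = ((p.1 + k * (1 + (t - 1) * p.2)) / n, p.2) := by
  ext
  · simp only [sliceEquiv, frameAffineEquiv_apply, Prod.fst_add, Prod.smul_fst, smul_eq_mul]
    field_simp
    ring
  · simp [sliceEquiv]

theorem image_sliceEquiv_stdTrapezoid (t : ℝ) {n : ℝ} (hn : n ≠ 0) (k : ℝ) :
    sliceEquiv t hn k '' stdTrapezoid t = stdSlice t n k := by
  ext ⟨x, y⟩
  constructor
  · rintro ⟨⟨x', y'⟩, ⟨h1, h2, h3, h4⟩, hxy⟩
    rw [sliceEquiv_apply, Prod.ext_iff] at hxy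
    obtain ⟨rfl, rfl⟩ := hxy
    have hx : n * ((x' + k * (1 + (t - 1) * y')) / n) = x' + k * (1 + (t - 1) * y') :=
      mul_div_cancel₀ _ hn
    exact ⟨h1, h2, by rw [hx]; linarith, by rw [hx]; linarith⟩
  · rintro ⟨h1, h2, h3, h4⟩
    refine ⟨(n * x - k * (1 + (t - 1) * y), y), ⟨h1, h2, by linarith, by linarith⟩, ?_⟩
    rw [sliceEquiv_apply, sub_add_cancel, mul_div_cancel_left₀ _ hn]

theorem iUnion_stdSlice {t : ℝ} (ht : 0 < t) {n : ℕ} (hn : 0 < n) :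
    ⋃ k : Fin n, stdSlice t n k = stdTrapezoid t := by
  ext ⟨x, y⟩
  simp only [mem_iUnion]
  constructor
  · rintro ⟨k, h1, h2, h3, h4⟩
    have hw := one_add_sub_one_mul_pos ht h1 h2
    have hk : (k : ℝ) + 1 ≤ n := by exact_mod_cast k.isLt
    have hn' : (0 : ℝ) < n := by exact_mod_cast hn
    refine ⟨h1, h2, ?_, ?_⟩
    · nlinarith [mul_nonneg (Nat.cast_nonneg (α := ℝ) k) hw.le]
    · nlinarith [mul_le_mul_of_nonneg_right hk hw.le]
  · rintro ⟨h1, h2, h3, h4⟩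
    have hw := one_add_sub_one_mul_pos ht h1 h2
    obtain ⟨k, hkn, hk1, hk2⟩ := exists_nat_lt_le_le_add_one hn (s := n * x / (1 + (t - 1) * y))
      (by positivity) (by rw [div_le_iff₀ hw]; gcongr)
    exact ⟨⟨k, hkn⟩, h1, h2, (le_div_iff₀ hw).1 hk1, (div_le_iff₀ hw).1 hk2⟩

theorem disjoint_interior_stdSlice {t : ℝ} (ht : 0 < t) {n : ℝ} (hn : n ≠ 0) {i j : ℝ}
    (hij : i + 1 ≤ j) : Disjoint (interior (stdSlice t n i)) (interior (stdSlice t n j)) := by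
  -- the line through the right edge of slice `i` separates the two slices
  let f : (ℝ × ℝ) →L[ℝ] ℝ :=
    n • ContinuousLinearMap.fst ℝ ℝ ℝ - ((i + 1) * (t - 1)) • ContinuousLinearMap.snd ℝ ℝ ℝ
  have hf_apply : ∀ p, f p = n * p.1 - (i + 1) * (t - 1) * p.2 := fun p => by simp [f]
  have hf : f ≠ 0 := fun h => hn (by simpa [hf_apply] using congrArg (· (1, 0)) h)
  refine disjoint_interior_of_subset_halfSpaces hf (c := i + 1) ?_ ?_
  · rintro p ⟨-, -, -, h⟩
    rw [mem_ofPred_eq, hf_apply]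
    linarith
  · rintro p ⟨h1, h2, h3, -⟩
    have hw := one_add_sub_one_mul_pos ht h1 h2
    rw [mem_ofPred_eq, hf_apply]
    nlinarith [mul_le_mul_of_nonneg_right hij hw.le]

theorem isSelfAffine_stdTrapezoid {t : ℝ} (ht : 0 < t) {n : ℕ} (hn : 0 < n) :
    IsSelfAffine n (stdTrapezoid t) := by
  have hn' : (n : ℝ) ≠ 0 := by positivity
  refine ⟨fun k => sliceEquiv t hn' k, ?_, fun i j hij => ?_⟩
  · simp only [image_sliceEquiv_stdTrapezoid]
    exact iUnion_stdSlice ht hn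
  · simp only [image_sliceEquiv_stdTrapezoid]
    rcases lt_or_gt_of_ne (Fin.val_ne_of_ne hij) with h | h
    · exact disjoint_interior_stdSlice ht hn' (by exact_mod_cast h)
    · exact (disjoint_interior_stdSlice ht hn' (by exact_mod_cast h)).symm

theorem pos_of_stdDiagonals_meet {t : ℝ} (ht : t ≠ 0)
    (h : (segment ℝ ((0 : ℝ), (0 : ℝ)) (t, 1) ∩ segment ℝ (1, 0) (0, 1)).Nonempty) : 0 < t := by
  obtain ⟨p, ⟨α, β, hα, hβ, hαβ, rfl⟩, ⟨α', β', hα', hβ', hαβ', hp⟩⟩ := h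
  simp only [Prod.ext_iff, Prod.fst_add, Prod.snd_add, Prod.smul_fst, Prod.smul_snd,
    smul_eq_mul, mul_zero, mul_one, add_zero, zero_add] at hp
  obtain ⟨hα'β, hβ'β⟩ := hp
  by_contra! ht'
  have hβt : β * t = 0 := le_antisymm (mul_nonpos_of_nonneg_of_nonpos hβ ht') (hα'β ▸ hα')
  rcases mul_eq_zero.1 hβt with hβ0 | ht0
  · linarith
  · exact ht ht0

theorem isSelfAffine_convexHull_of_sub_eq_smul {n : ℕ} (hn : 0 < n) {a b c d : ℝ × ℝ}
    (ha : a ∉ segment ℝ b d) (hb : b ∉ segment ℝ a d) (hd : d ∉ segment ℝ a b) (hcd : c ≠ d)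
    (hcross : (segment ℝ a c ∩ segment ℝ b d).Nonempty) {t : ℝ} (hpar : c - d = t • (b - a)) :
    IsSelfAffine n (convexHull ℝ {a, b, c, d}) := by
  set E := frameAffineEquiv a (b - a) (d - a) (cross_sub_ne_zero ha hb hd)
  have hEa : E (0, 0) = a := by simp [E]
  have hEb : E (1, 0) = b := by simp [E]
  have hEc : E (t, 1) = c := by simp [E, ← hpar]
  have hEd : E (0, 1) = d := by simp [E]
  have ht : 0 < t := by
    refine pos_of_stdDiagonals_meet (fun ht => hcd ?_) ?_
    · simpa [ht, sub_eq_zero] using hpar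
    · have hseg : ∀ x y, segment ℝ (E x) (E y) = E '' segment ℝ x y := fun x y =>
        (image_segment ℝ E.toAffineMap x y).symm
      rwa [← hEa, ← hEb, ← hEc, ← hEd, hseg, hseg, ← image_inter E.injective,
        image_nonempty] at hcross
  have hT : convexHull ℝ {a, b, c, d} = E '' stdTrapezoid t := by
    rw [← convexHull_stdVertices ht, ← hEa, ← hEb, ← hEc, ← hEd, ← AffineEquiv.coe_toAffineMap,
      AffineMap.image_convexHull]
    simp only [image_insert_eq, image_singleton, AffineEquiv.coe_toAffineMap]
  rw [hT]
  exact (isSelfAffine_stdTrapezoid ht hn).image E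

/-- Every trapezoid is `n`-self-affine for every integer `n ≥ 2`. -/
theorem trapezoid_self_affine (T : Set (ℝ × ℝ)) (hT : IsTrapezoid T)
    (n : ℕ) (hn : 2 ≤ n) : IsSelfAffine n T := by
  obtain ⟨a, b, c, d, rfl, ha, hb, hc, hd, hcross, hpar⟩ := hT
  have hseg : ∀ {x y z : ℝ × ℝ} {s : Set (ℝ × ℝ)}, x ∉ convexHull ℝ s → y ∈ s → z ∈ s →
      x ∉ segment ℝ y z := fun hx hy hz h => hx (segment_subset_convexHull hy hz h)
  have hne : ∀ {x y : ℝ × ℝ} {s : Set (ℝ × ℝ)}, x ∉ convexHull ℝ s → y ∈ s → y ≠ x :=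
    fun hx hy h => hx (h ▸ subset_convexHull ℝ _ hy)
  rcases hpar with ⟨t, hpar⟩ | ⟨t, hpar⟩
  · exact isSelfAffine_convexHull_of_sub_eq_smul (by omega) (hseg ha (by simp) (by simp))
      (hseg hb (by simp) (by simp)) (hseg hd (by simp) (by simp)) (hne hd (by simp)) hcross hpar
  · rw [show ({a, b, c, d} : Set (ℝ × ℝ)) = {b, c, d, a} by
      ext; simp only [mem_insert_iff, mem_singleton_iff]; tauto]
    refine isSelfAffine_convexHull_of_sub_eq_smul (by omega) (hseg hb (by simp) (by simp))
      (hseg hc (by simp) (by simp)) (hseg ha (by simp) (by simp)) (hne ha (by simp))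
      ?_ (t := -t) (by rw [neg_smul, ← hpar, neg_sub])
    obtain ⟨p, hac, hbd⟩ := hcross
    exact ⟨p, hbd, segment_symm ℝ a c ▸ hac⟩
end

section
/- For all real numbers α₁, β₁, α₂, β₂ with 0 < α₁ < β₁ < 1 and 0 < α₂ < β₂ < 1, the quadrangle Q(α₁α₂, β₁β₂) admits a dissection into two pieces, one affinely equivalent to Q(α₁, β₁) and the other affinely equivalent to Q(α₂, β₂). -/
/-!
The segment from `u = (1 - α₁, 0)` on the bottom edge to the point `v = (1 - β₁, ·)` of the edge
`cd` cuts `Q(α₁α₂, β₁β₂)` into the quadrangles `a u v d` and `u b c v`. The first is the image of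
`Q(α₁, β₁)` under a vertical stretch, the second the image of `Q(α₂, β₂)` under an affine map
`(x, y) ↦ (1 - α₁ + α₁ x + q y, s y)`; matching the vertices is a rational identity.
The two pieces cover the quadrangle by convexity: every point lies on a segment from the edge `ad`
to the edge `bc`, and this segment crosses the cut line inside `uv`, since the quadrangle, lying
above the bottom edge and below the edge `cd`, meets the cut line exactly in `uv`.
-/
open Set

/-- For `0 < α < β < 1`, `Qab α β` is the convex quadrangle `Q(α,β)` with vertices
`a = (0,0)`, `b = (1−α,0)`, `c = (1−β, 1−(1−β)/(1−α))`, `d = (0, 1−α(1−β)/((1−α)β))`. -/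
noncomputable def Qab (α β : ℝ) : Set (ℝ × ℝ) :=
  convexHull ℝ {((0 : ℝ), (0 : ℝ)), (1 - α, 0), (1 - β, 1 - (1 - β) / (1 - α)),
    (0, 1 - α * (1 - β) / ((1 - α) * β))}

/-- For `0 < γ < 1`, `Tg γ` is the trapezoid `T(γ)` with vertices
`(0,0)`, `(1,0)`, `(γ,1)`, `(0,1)`. -/
noncomputable def Tg (γ : ℝ) : Set (ℝ × ℝ) :=
  convexHull ℝ {((0 : ℝ), (0 : ℝ)), (1, 0), (γ, 1), (0, 1)}

/-- `B` is the image of `A` under an invertible affine map of the plane,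
i.e. `A` and `B` are affinely equivalent. -/
def AffineCopy (A B : Set (ℝ × ℝ)) : Prop :=
  ∃ φ : (ℝ × ℝ) ≃ᵃ[ℝ] (ℝ × ℝ), φ '' A = B

section ConvexCut

variable {E : Type*} [AddCommGroup E] [Module ℝ E]

theorem exists_mem_segment_apply_eq (ℓ : E →ₗ[ℝ] ℝ) {y z : E} {r : ℝ}
    (hy : ℓ y ≤ r) (hz : r ≤ ℓ z) : ∃ w ∈ segment ℝ y z, ℓ w = r := by
  have : r ∈ ℓ.toAffineMap '' segment ℝ y z := by
    rw [image_segment, LinearMap.coe_toAffineMap, segment_eq_Icc (hy.trans hz)]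
    exact ⟨hy, hz⟩
  simpa using this

theorem exists_apply_eq_of_mem_segment (ℓ : E →ₗ[ℝ] ℝ) {x y z : E} {r : ℝ}
    (hx : x ∈ segment ℝ y z) (hxr : ℓ x ≤ r) (hzr : r ≤ ℓ z) :
    ∃ w ∈ segment ℝ x z, ℓ w = r ∧ x ∈ segment ℝ y w := by
  obtain ⟨w, hw, hwr⟩ := exists_mem_segment_apply_eq ℓ hxr hzr
  exact ⟨w, hw, hwr, (Wbtw.trans_right_left (mem_segment_iff_wbtw.1 hx)
    (mem_segment_iff_wbtw.1 hw)).mem_segment⟩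

variable {a b c d u v : E} {ℓ : E →ₗ[ℝ] ℝ} {r : ℝ}

theorem convexHull_quad_inter_halfSpace_subset (hb : r ≤ ℓ b) (hc : r ≤ ℓ c)
    (hcut : ∀ w ∈ convexHull ℝ {a, b, c, d}, ℓ w = r → w ∈ segment ℝ u v) :
    convexHull ℝ {a, b, c, d} ∩ {x | ℓ x ≤ r} ⊆ convexHull ℝ {a, u, v, d} := by
  rintro x ⟨hxK, hxr⟩
  have hK : convexHull ℝ {a, b, c, d} = convexJoin ℝ (segment ℝ a d) (segment ℝ b c) := by
    rw [← convexHull_pair, ← convexHull_pair, ← convexHull_union (by simp) (by simp)]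
    congr 1
    ext; simp only [mem_insert_iff, mem_singleton_iff, mem_union]; tauto
  obtain ⟨y, hy, z, hz, hxyz⟩ := mem_convexJoin.1 (hK ▸ hxK)
  have hzr : r ≤ ℓ z := (convex_halfSpace_ge ℓ.isLinear r).segment_subset hb hc hz
  obtain ⟨w, hwxz, hwr, hxyw⟩ := exists_apply_eq_of_mem_segment ℓ hxyz hxr hzr
  have hzK : z ∈ convexHull ℝ {a, b, c, d} :=
    segment_subset_convexHull (by simp) (by simp) hz
  have hwK := (convex_convexHull ℝ _).segment_subset hxK hzK hwxz
  refine (convex_convexHull ℝ _).segment_subset ?_ ?_ hxyw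
  · exact segment_subset_convexHull (by simp) (by simp) hy
  · exact segment_subset_convexHull (by simp) (by simp) (hcut w hwK hwr)

theorem convexHull_quad_eq_union (hu : u ∈ segment ℝ a b) (hv : v ∈ segment ℝ d c)
    (ha : ℓ a ≤ r) (hb : r ≤ ℓ b) (hc : r ≤ ℓ c) (hd : ℓ d ≤ r)
    (hcut : ∀ w ∈ convexHull ℝ {a, b, c, d}, ℓ w = r → w ∈ segment ℝ u v) :
    convexHull ℝ {a, b, c, d} = convexHull ℝ {a, u, v, d} ∪ convexHull ℝ {u, b, c, v} := by
  have hK : convexHull ℝ {a, b, c, d} = convexHull ℝ {b, a, d, c} := by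
    congr 1; ext; simp only [mem_insert_iff, mem_singleton_iff]; tauto
  have huK : u ∈ convexHull ℝ {a, b, c, d} := segment_subset_convexHull (by simp) (by simp) hu
  have hvK : v ∈ convexHull ℝ {a, b, c, d} := segment_subset_convexHull (by simp) (by simp) hv
  refine Subset.antisymm (fun x hx ↦ ?_) (union_subset ?_ ?_)
  · rcases le_total (ℓ x) r with hxr | hxr
    · exact Or.inl (convexHull_quad_inter_halfSpace_subset hb hc hcut ⟨hx, hxr⟩)
    · right
      have hcut' : ∀ w ∈ convexHull ℝ {b, a, d, c}, (-ℓ) w = -r → w ∈ segment ℝ u v := by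
        intro w hw hwr
        exact hcut w (hK ▸ hw) (by simpa using hwr)
      have := convexHull_quad_inter_halfSpace_subset (ℓ := -ℓ) (r := -r) (by simpa using ha)
        (by simpa using hd) hcut' ⟨hK ▸ hx, by simpa using hxr⟩
      convert this using 2
      ext; simp only [mem_insert_iff, mem_singleton_iff]; tauto
  all_goals
    refine convexHull_min ?_ (convex_convexHull ℝ _)
    rintro p (rfl | rfl | rfl | rfl) <;>
      first | exact huK | exact hvK | exact subset_convexHull ℝ _ (by simp)

/-- Since `(ℓ, g)` are coordinates, `g` parametrises the line `ℓ = ℓ w`; along it `g` bounds `w`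
from the side of `u` and `h` from the side of `v`. -/
theorem mem_segment_of_apply_eq {ℓ g h : E →ₗ[ℝ] ℝ} (hinj : Function.Injective (ℓ.prod g))
    {w : E} (hu : ℓ u = ℓ w) (hv : ℓ v = ℓ w) (hgw : g u ≤ g w) (hguv : g u < g v)
    (hhw : h w ≤ h v) (hhuv : h u < h v) : w ∈ segment ℝ u v := by
  set θ := (g w - g u) / (g v - g u)
  have hw : AffineMap.lineMap u v θ = w := by
    refine hinj (Prod.ext ?_ ?_)
    · simp [AffineMap.lineMap_apply_module, hu, hv]
      ring
    · have : g v - g u ≠ 0 := sub_ne_zero.2 hguv.ne'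
      simp [AffineMap.lineMap_apply_module, θ]
      field_simp
      ring
  have hθ1 : θ ≤ 1 := by
    have : h (AffineMap.lineMap u v θ) = h u + θ * (h v - h u) := by
      simp [AffineMap.lineMap_apply_module]; ring
    rw [hw] at this
    nlinarith
  rw [segment_eq_image_lineMap]
  exact ⟨θ, ⟨div_nonneg (by linarith) (by linarith), hθ1⟩, hw⟩

end ConvexCut

theorem disjoint_interior_of_subset_halfSpaces_s4 {E : Type*} [AddCommGroup E] [TopologicalSpace E]
    [ContinuousAdd E] [Module ℝ E] [ContinuousSMul ℝ E] {ℓ : StrongDual ℝ E} (hℓ : ℓ ≠ 0)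
    {r : ℝ} {P Q : Set E} (hP : P ⊆ {x | ℓ x ≤ r}) (hQ : Q ⊆ {x | r ≤ ℓ x}) :
    Disjoint (interior P) (interior Q) := by
  rw [Set.disjoint_iff]
  intro x hx
  have hon : ∀ y ∈ interior P ∩ interior Q, ℓ y = r := fun y hy ↦
    le_antisymm (hP (interior_subset hy.1)) (hQ (interior_subset hy.2))
  have himage : ℓ '' (interior P ∩ interior Q) = {r} :=
    Subset.antisymm (by rintro _ ⟨y, hy, rfl⟩; exact hon y hy)
      (singleton_subset_iff.2 ⟨x, hx, hon x hx⟩)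
  exact not_isOpen_singleton r
    (himage ▸ ℓ.isOpenMap_of_ne_zero hℓ _ (isOpen_interior.inter isOpen_interior))

noncomputable def planeForm (k m : ℝ) : StrongDual ℝ (ℝ × ℝ) :=
  k • ContinuousLinearMap.fst ℝ ℝ ℝ + m • ContinuousLinearMap.snd ℝ ℝ ℝ

@[simp]
theorem planeForm_apply (k m : ℝ) (p : ℝ × ℝ) : planeForm k m p = k * p.1 + m * p.2 := by
  simp [planeForm]

theorem planeForm_ne_zero {k : ℝ} (hk : k ≠ 0) (m : ℝ) : planeForm k m ≠ 0 := fun h ↦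
  hk (by simpa using congr($h (1, 0)))

theorem planeForm_prod_snd_injective {k : ℝ} (hk : k ≠ 0) (m : ℝ) :
    Function.Injective ((planeForm k m : (ℝ × ℝ) →ₗ[ℝ] ℝ).prod (LinearMap.snd ℝ ℝ ℝ)) := by
  intro p q h
  have h₁ := congrArg Prod.fst h
  have h₂ := congrArg Prod.snd h
  simp only [LinearMap.prod_apply, ContinuousLinearMap.coe_coe, LinearMap.coe_snd,
    Function.prod_apply, planeForm_apply] at h₁ h₂
  rw [h₂] at h₁
  exact Prod.ext (mul_left_cancel₀ hk (by linarith)) h₂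

noncomputable def triangularAffineEquiv (t p q s : ℝ) (hp : p ≠ 0) (hs : s ≠ 0) :
    (ℝ × ℝ) ≃ᵃ[ℝ] ℝ × ℝ :=
  (LinearEquiv.ofLinearMap
    ((p • LinearMap.fst ℝ ℝ ℝ + q • LinearMap.snd ℝ ℝ ℝ).prod (s • LinearMap.snd ℝ ℝ ℝ))
    ((p⁻¹ • LinearMap.fst ℝ ℝ ℝ + (-q / (p * s)) • LinearMap.snd ℝ ℝ ℝ).prod
      (s⁻¹ • LinearMap.snd ℝ ℝ ℝ))
    (by ext <;> simp [field]) (by ext <;> simp [field])).toAffineEquiv.trans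
    (AffineEquiv.constVAdd ℝ (ℝ × ℝ) (t, 0))

@[simp]
theorem triangularAffineEquiv_apply (t p q s : ℝ) (hp : p ≠ 0) (hs : s ≠ 0) (x y : ℝ) :
    triangularAffineEquiv t p q s hp hs (x, y) = (t + (p * x + q * y), s * y) := by
  simp [triangularAffineEquiv]

theorem affineCopy_convexHull_quad (φ : (ℝ × ℝ) ≃ᵃ[ℝ] ℝ × ℝ) {p₁ p₂ p₃ p₄ q₁ q₂ q₃ q₄ : ℝ × ℝ}
    (h₁ : φ p₁ = q₁) (h₂ : φ p₂ = q₂) (h₃ : φ p₃ = q₃) (h₄ : φ p₄ = q₄) :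
    AffineCopy (convexHull ℝ {p₁, p₂, p₃, p₄}) (convexHull ℝ {q₁, q₂, q₃, q₄}) :=
  ⟨φ, by
    rw [← AffineEquiv.coe_toAffineMap, AffineMap.image_convexHull]
    simp [image_insert_eq, h₁, h₂, h₃, h₄]⟩

def IsQabParam (α β : ℝ) : Prop := 0 < α ∧ α < β ∧ β < 1

theorem IsQabParam.mul {α₁ β₁ α₂ β₂ : ℝ} (h₁ : IsQabParam α₁ β₁) (h₂ : IsQabParam α₂ β₂) :
    IsQabParam (α₁ * α₂) (β₁ * β₂) := by
  obtain ⟨hα₁, hαβ₁, hβ₁⟩ := h₁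
  obtain ⟨hα₂, hαβ₂, hβ₂⟩ := h₂
  exact ⟨mul_pos hα₁ hα₂, mul_lt_mul'' hαβ₁ hαβ₂ hα₁.le hα₂.le,
    mul_lt_one_of_nonneg_of_lt_one_left (by linarith) hβ₁ hβ₂.le⟩

noncomputable def vertexC (α β : ℝ) : ℝ × ℝ := (1 - β, (β - α) / (1 - α))

noncomputable def vertexD (α β : ℝ) : ℝ × ℝ := (0, (β - α) / ((1 - α) * β))

theorem Qab_eq_convexHull {α β : ℝ} (hα : α ≠ 1) (hβ : β ≠ 0) :
    Qab α β = convexHull ℝ {(0, 0), (1 - α, 0), vertexC α β, vertexD α β} := by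
  have : 1 - α ≠ 0 := sub_ne_zero.2 hα.symm
  have hc : 1 - (1 - β) / (1 - α) = (β - α) / (1 - α) := by field_simp; ring
  have hd : 1 - α * (1 - β) / ((1 - α) * β) = (β - α) / ((1 - α) * β) := by field_simp; ring
  rw [Qab, vertexC, vertexD, hc, hd]

/-- The second half-plane is bounded by the line through the vertices `c` and `d`. -/
theorem Qab_subset_halfSpaces {α β : ℝ} (h : IsQabParam α β) :
    Qab α β ⊆ {p | 0 ≤ p.2} ∩ {p | planeForm (β - α) ((1 - α) * β) p ≤ β - α} := by
  obtain ⟨hα, hαβ, hβ⟩ := h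
  rw [Qab_eq_convexHull (by linarith) (by linarith)]
  refine convexHull_min ?_ ((convex_halfSpace_ge (LinearMap.snd ℝ ℝ ℝ).isLinear 0).inter
    (convex_halfSpace_le (planeForm _ _ : (ℝ × ℝ) →ₗ[ℝ] ℝ).isLinear _))
  have h1α : 0 < 1 - α := by linarith
  have hβα : 0 < β - α := by linarith
  have hβ0 : 0 < β := by linarith
  simp only [insert_subset_iff, singleton_subset_iff, vertexC, vertexD, mem_inter_iff,
    mem_ofPred_eq, planeForm_apply]
  refine ⟨⟨le_rfl, by simp [hαβ.le]⟩, ⟨le_rfl, by nlinarith⟩,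
    ⟨(div_pos hβα h1α).le, le_of_eq ?_⟩, ⟨(div_pos hβα (by positivity)).le, le_of_eq ?_⟩⟩ <;>
    field_simp <;> ring

section Cut

variable (α₁ β₁ α₂ β₂ : ℝ)

noncomputable def cutPoint : ℝ × ℝ := (1 - β₁, (β₁ * β₂ - α₁ * α₂) / ((1 - α₁ * α₂) * β₂))

noncomputable def cutForm : StrongDual ℝ (ℝ × ℝ) :=
  planeForm 1 ((β₁ - α₁) * (1 - α₁ * α₂) * β₂ / (β₁ * β₂ - α₁ * α₂))

noncomputable def leftPiece : Set (ℝ × ℝ) :=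
  convexHull ℝ {(0, 0), (1 - α₁, 0), cutPoint α₁ β₁ α₂ β₂, vertexD (α₁ * α₂) (β₁ * β₂)}

noncomputable def rightPiece : Set (ℝ × ℝ) :=
  convexHull ℝ {(1 - α₁, 0), (1 - α₁ * α₂, 0), vertexC (α₁ * α₂) (β₁ * β₂), cutPoint α₁ β₁ α₂ β₂}

variable {α₁ β₁ α₂ β₂}

theorem cutForm_cutPoint (h₁ : IsQabParam α₁ β₁) (h₂ : IsQabParam α₂ β₂) :
    cutForm α₁ β₁ α₂ β₂ (cutPoint α₁ β₁ α₂ β₂) = 1 - α₁ := by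
  obtain ⟨-, hAB, hB⟩ := h₁.mul h₂
  have : 1 - α₁ * α₂ ≠ 0 := by linarith
  have : β₁ * β₂ - α₁ * α₂ ≠ 0 := by linarith
  have : β₂ ≠ 0 := by linarith [h₂.1, h₂.2.1]
  simp only [cutForm, cutPoint, planeForm_apply]
  field_simp
  ring

theorem leftPiece_subset (h₁ : IsQabParam α₁ β₁) (h₂ : IsQabParam α₂ β₂) :
    leftPiece α₁ β₁ α₂ β₂ ⊆ {p | cutForm α₁ β₁ α₂ β₂ p ≤ 1 - α₁} := by
  have hv := cutForm_cutPoint h₁ h₂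
  obtain ⟨-, hAB, hB⟩ := h₁.mul h₂
  obtain ⟨hα₁, hαβ₁, hβ₁⟩ := h₁
  have : 1 - α₁ * α₂ ≠ 0 := by linarith
  have : β₁ * β₂ - α₁ * α₂ ≠ 0 := by linarith
  have : β₁ ≠ 0 := by linarith
  have : β₂ ≠ 0 := by linarith [h₂.1, h₂.2.1]
  have hd : cutForm α₁ β₁ α₂ β₂ (vertexD (α₁ * α₂) (β₁ * β₂)) = 1 - α₁ / β₁ := by
    simp only [cutForm, vertexD, planeForm_apply]
    field_simp
    ring
  have hα₁β₁ : α₁ ≤ α₁ / β₁ := by rw [le_div_iff₀ (by linarith)]; nlinarith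
  refine convexHull_min ?_ (convex_halfSpace_le (cutForm α₁ β₁ α₂ β₂ : (ℝ × ℝ) →ₗ[ℝ] ℝ).isLinear _)
  simp only [insert_subset_iff, singleton_subset_iff, mem_ofPred_eq, hv, hd]
  refine ⟨?_, ?_, le_rfl, by linarith⟩
  · simp [cutForm]; linarith
  · simp [cutForm]

theorem rightPiece_subset (h₁ : IsQabParam α₁ β₁) (h₂ : IsQabParam α₂ β₂) :
    rightPiece α₁ β₁ α₂ β₂ ⊆ {p | 1 - α₁ ≤ cutForm α₁ β₁ α₂ β₂ p} := by
  have hv := cutForm_cutPoint h₁ h₂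
  obtain ⟨-, hAB, hB⟩ := h₁.mul h₂
  obtain ⟨hα₁, -, -⟩ := h₁
  obtain ⟨-, hαβ₂, hβ₂⟩ := h₂
  have : 1 - α₁ * α₂ ≠ 0 := by linarith
  have : β₁ * β₂ - α₁ * α₂ ≠ 0 := by linarith
  have hc : cutForm α₁ β₁ α₂ β₂ (vertexC (α₁ * α₂) (β₁ * β₂)) = 1 - α₁ * β₂ := by
    simp only [cutForm, vertexC, planeForm_apply]
    field_simp
    ring
  refine convexHull_min ?_ (convex_halfSpace_ge (cutForm α₁ β₁ α₂ β₂ : (ℝ × ℝ) →ₗ[ℝ] ℝ).isLinear _)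
  simp only [insert_subset_iff, singleton_subset_iff, mem_ofPred_eq, hv, hc]
  refine ⟨?_, ?_, by nlinarith, le_rfl⟩
  · simp [cutForm]
  · simp [cutForm]; nlinarith

theorem mem_segment_of_mem_Qab_of_cutForm_eq (h₁ : IsQabParam α₁ β₁) (h₂ : IsQabParam α₂ β₂)
    {w : ℝ × ℝ} (hw : w ∈ Qab (α₁ * α₂) (β₁ * β₂)) (hwr : cutForm α₁ β₁ α₂ β₂ w = 1 - α₁) :
    w ∈ segment ℝ (1 - α₁, 0) (cutPoint α₁ β₁ α₂ β₂) := by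
  obtain ⟨hw₂, hwtop⟩ := Qab_subset_halfSpaces (h₁.mul h₂) hw
  have hv := cutForm_cutPoint h₁ h₂
  obtain ⟨-, hAB, hB⟩ := h₁.mul h₂
  obtain ⟨hα₁, -, -⟩ := h₁
  obtain ⟨hα₂, hαβ₂, -⟩ := h₂
  have : 1 - α₁ * α₂ ≠ 0 := by linarith
  have : β₂ ≠ 0 := by linarith
  have htop : planeForm (β₁ * β₂ - α₁ * α₂) ((1 - α₁ * α₂) * (β₁ * β₂)) (cutPoint α₁ β₁ α₂ β₂) =
      β₁ * β₂ - α₁ * α₂ := by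
    simp only [cutPoint, planeForm_apply]
    field_simp
    ring
  refine mem_segment_of_apply_eq (ℓ := cutForm α₁ β₁ α₂ β₂) (g := LinearMap.snd ℝ ℝ ℝ)
    (h := planeForm (β₁ * β₂ - α₁ * α₂) ((1 - α₁ * α₂) * (β₁ * β₂)))
    (planeForm_prod_snd_injective one_ne_zero _) ?_ ?_ ?_ ?_ ?_ ?_
  · simpa [cutForm] using hwr.symm
  · simpa [hv] using hwr.symm
  · simpa using hw₂
  · simp only [LinearMap.snd_apply, cutPoint]
    exact div_pos (by linarith) (mul_pos (by linarith) (by linarith))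
  · simpa [htop] using hwtop
  · simp only [ContinuousLinearMap.coe_coe, htop, planeForm_apply]
    nlinarith

theorem Qab_mul_eq_union (h₁ : IsQabParam α₁ β₁) (h₂ : IsQabParam α₂ β₂) :
    Qab (α₁ * α₂) (β₁ * β₂) = leftPiece α₁ β₁ α₂ β₂ ∪ rightPiece α₁ β₁ α₂ β₂ := by
  have hcut := fun w ↦ mem_segment_of_mem_Qab_of_cutForm_eq (w := w) h₁ h₂
  have hleft := leftPiece_subset h₁ h₂
  have hright := rightPiece_subset h₁ h₂
  obtain ⟨hA, hAB, hB⟩ := h₁.mul h₂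
  obtain ⟨hα₁, hαβ₁, hβ₁⟩ := h₁
  obtain ⟨hα₂, hαβ₂, hβ₂⟩ := h₂
  have : 1 - α₁ * α₂ ≠ 0 := by linarith
  have hu : ((1 - α₁, 0) : ℝ × ℝ) ∈ segment ℝ (0, 0) (1 - α₁ * α₂, 0) := by
    rw [segment_eq_image_lineMap]
    refine ⟨(1 - α₁) / (1 - α₁ * α₂), ⟨div_nonneg (by linarith) (by linarith),
      (div_le_one (by linarith)).2 (by nlinarith)⟩, ?_⟩
    simp [AffineMap.lineMap_apply_module]
    field_simp
  have hv : cutPoint α₁ β₁ α₂ β₂ ∈ segment ℝ (vertexD (α₁ * α₂) (β₁ * β₂))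
      (vertexC (α₁ * α₂) (β₁ * β₂)) := by
    rw [segment_eq_image_lineMap]
    refine ⟨(1 - β₁) / (1 - β₁ * β₂), ⟨div_nonneg (by linarith) (by linarith),
      (div_le_one (by linarith)).2 (by nlinarith)⟩, ?_⟩
    have : 1 - β₁ * β₂ ≠ 0 := by linarith
    have : β₁ ≠ 0 := by linarith
    have : β₂ ≠ 0 := by linarith
    simp only [AffineMap.lineMap_apply_module, vertexC, vertexD, cutPoint, Prod.smul_mk,
      Prod.mk_add_mk, smul_eq_mul, Prod.mk.injEq]
    constructor <;> field_simp <;> ring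
  rw [Qab_eq_convexHull (by linarith) (by linarith)] at hcut ⊢
  exact convexHull_quad_eq_union (ℓ := cutForm α₁ β₁ α₂ β₂) hu hv
    (hleft (subset_convexHull ℝ _ (by simp))) (hright (subset_convexHull ℝ _ (by simp)))
    (hright (subset_convexHull ℝ _ (by simp))) (hleft (subset_convexHull ℝ _ (by simp))) hcut

theorem disjoint_interior_leftPiece_rightPiece (h₁ : IsQabParam α₁ β₁)
    (h₂ : IsQabParam α₂ β₂) :
    Disjoint (interior (leftPiece α₁ β₁ α₂ β₂)) (interior (rightPiece α₁ β₁ α₂ β₂)) :=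
  disjoint_interior_of_subset_halfSpaces_s4 (planeForm_ne_zero one_ne_zero _)
    (leftPiece_subset h₁ h₂) (rightPiece_subset h₁ h₂)

theorem affineCopy_leftPiece (h₁ : IsQabParam α₁ β₁) (h₂ : IsQabParam α₂ β₂) :
    AffineCopy (Qab α₁ β₁) (leftPiece α₁ β₁ α₂ β₂) := by
  obtain ⟨-, hAB, hB⟩ := h₁.mul h₂
  obtain ⟨hα₁, hαβ₁, hβ₁⟩ := h₁
  obtain ⟨hα₂, hαβ₂, -⟩ := h₂
  have : 1 - α₁ ≠ 0 := by linarith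
  have : 1 - α₁ * α₂ ≠ 0 := by linarith
  have : β₁ ≠ 0 := by linarith
  have : β₂ ≠ 0 := by linarith
  have : β₁ - α₁ ≠ 0 := by linarith
  have hk : (β₁ * β₂ - α₁ * α₂) * (1 - α₁) / ((1 - α₁ * α₂) * β₂ * (β₁ - α₁)) ≠ 0 := by
    have : β₁ * β₂ - α₁ * α₂ ≠ 0 := by linarith
    positivity
  rw [Qab_eq_convexHull (by linarith) (by linarith), leftPiece]
  refine affineCopy_convexHull_quad (triangularAffineEquiv 0 1 0 _ one_ne_zero hk)
    (by simp) (by simp) ?_ ?_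
  · simp only [vertexC, cutPoint, triangularAffineEquiv_apply, Prod.mk.injEq]
    constructor
    · ring
    · field_simp
  · simp only [vertexD, triangularAffineEquiv_apply, Prod.mk.injEq]
    constructor
    · ring
    · field_simp

theorem affineCopy_rightPiece (h₁ : IsQabParam α₁ β₁) (h₂ : IsQabParam α₂ β₂) :
    AffineCopy (Qab α₂ β₂) (rightPiece α₁ β₁ α₂ β₂) := by
  obtain ⟨-, hAB, hB⟩ := h₁.mul h₂
  obtain ⟨hα₁, -, -⟩ := h₁
  obtain ⟨hα₂, hαβ₂, hβ₂⟩ := h₂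
  have : 1 - α₂ ≠ 0 := by linarith
  have : 1 - α₁ * α₂ ≠ 0 := by linarith
  have : β₂ ≠ 0 := by linarith
  have : β₂ - α₂ ≠ 0 := by linarith
  have hn : (β₁ * β₂ - α₁ * α₂) * (1 - α₂) / ((1 - α₁ * α₂) * (β₂ - α₂)) ≠ 0 := by
    have : β₁ * β₂ - α₁ * α₂ ≠ 0 := by linarith
    positivity
  rw [Qab_eq_convexHull (by linarith) (by linarith), rightPiece]
  refine affineCopy_convexHull_quad
    (triangularAffineEquiv (1 - α₁) α₁ (β₂ * (α₁ - β₁) * (1 - α₂) / (β₂ - α₂)) _ hα₁.ne' hn)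
    (by simp) (by simp; ring) ?_ ?_
  · simp only [vertexC, triangularAffineEquiv_apply, Prod.mk.injEq]
    constructor
    · field_simp
      ring
    · field_simp
  · simp only [vertexD, cutPoint, triangularAffineEquiv_apply, Prod.mk.injEq]
    constructor
    · field_simp
      ring
    · field_simp

end Cut

/-- The quadrangle `Q(α₁α₂, β₁β₂)` admits a dissection into two pieces, one affinely
equivalent to `Q(α₁,β₁)` and the other affinely equivalent to `Q(α₂,β₂)`. -/
theorem Qab_dot_Qab (α₁ β₁ α₂ β₂ : ℝ)
    (hα₁ : 0 < α₁) (hαβ₁ : α₁ < β₁) (hβ₁ : β₁ < 1)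
    (hα₂ : 0 < α₂) (hαβ₂ : α₂ < β₂) (hβ₂ : β₂ < 1) :
    ∃ P₁ P₂ : Set (ℝ × ℝ),
      P₁ ∪ P₂ = Qab (α₁ * α₂) (β₁ * β₂) ∧
      Disjoint (interior P₁) (interior P₂) ∧
      AffineCopy (Qab α₁ β₁) P₁ ∧ AffineCopy (Qab α₂ β₂) P₂ := by
  have h₁ : IsQabParam α₁ β₁ := ⟨hα₁, hαβ₁, hβ₁⟩
  have h₂ : IsQabParam α₂ β₂ := ⟨hα₂, hαβ₂, hβ₂⟩
  exact ⟨leftPiece α₁ β₁ α₂ β₂, rightPiece α₁ β₁ α₂ β₂, (Qab_mul_eq_union h₁ h₂).symm,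
    disjoint_interior_leftPiece_rightPiece h₁ h₂, affineCopy_leftPiece h₁ h₂,
    affineCopy_rightPiece h₁ h₂⟩
end

section
/- Let 0 < γ₁ < 1 and 0 < γ₂ < 1 be real numbers. Then: (a) the trapezoid T(γ₁γ₂) admits a dissection into two pieces, one affinely equivalent to T(γ₁) and the other affinely equivalent to T(γ₂); (b) for every γ with min{γ₁, γ₂} < γ < 1, the trapezoid T(γ) admits a dissection into two pieces, one affinely equivalent to T(γ₁) and the other affinely equivalent to T(γ₂); (c) the unit square [0,1]² admits a dissection into two pieces, one affinely equivalent to T(γ₁) and the other affinely equivalent to T(γ₂). -/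
open Set

/-!
Both dissections cut a trapezoid with horizontal parallel sides into two such trapezoids, and a
trapezoid whose top side is `r` times its bottom side is an affine image of `T(r)`.
`T(γ₁γ₂)` is cut horizontally at the height `t = (1 - γ₁) / (1 - γ₁γ₂)` where its slanted side
crosses `x = γ₁`; this leaves copies of `T(γ₁)` below and `T(γ₂)` above. For `γ₁ < γ ≤ 1`,
`T(γ)` is cut along the segment from `(p, 0)` to `(γ₁p, 1)` with `p = (1 - γ₂γ) / (1 - γ₁γ₂)`:
the left piece is a copy of `T(γ₁)`, and `p` is chosen so that the parallel sides of the right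
piece have ratio `γ₂`. The square is `T(1)`.
-/

open AffineMap Topology

/-- The quadrilateral `c ≤ y ≤ d`, `f y ≤ x ≤ g y`, given through its four vertices. -/
noncomputable def trapezoid (c d : ℝ) (f g : ℝ →ᵃ[ℝ] ℝ) : Set (ℝ × ℝ) :=
  convexHull ℝ {(f c, c), (g c, c), (g d, d), (f d, d)}

lemma exists_lineMap_eq_of_mem_Icc {c d y : ℝ} (hcd : c ≤ d) (hy : y ∈ Icc c d) :
    ∃ μ ∈ Icc (0 : ℝ) 1, lineMap c d μ = y := by
  rwa [← segment_eq_Icc hcd, segment_eq_image_lineMap] at hy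

lemma disjoint_interior_setOf_fst_le (φ : ℝ → ℝ) :
    Disjoint (interior {z : ℝ × ℝ | z.1 ≤ φ z.2}) (interior {z : ℝ × ℝ | φ z.2 ≤ z.1}) := by
  refine Set.disjoint_left.2 fun z hle hge => ?_
  have hz : φ z.2 ≤ z.1 := (interior_subset hge : z ∈ {z : ℝ × ℝ | φ z.2 ≤ z.1})
  have hnear : ∀ᶠ x in 𝓝 z.1, x ≤ φ z.2 :=
    (Continuous.prodMk_left z.2).continuousAt.preimage_mem_nhds (mem_interior_iff_mem_nhds.1 hle)
  obtain ⟨x, hxle, hxgt⟩ := (hnear.and_frequently (frequently_gt_nhds z.1)).exists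
  linarith

section Trapezoid

variable {c m d : ℝ} {f g k : ℝ →ᵃ[ℝ] ℝ}

lemma AffineMap.apply_le_apply_of_mem_Icc {y : ℝ} (hcd : c ≤ d) (hc : f c ≤ g c)
    (hd : f d ≤ g d) (hy : y ∈ Icc c d) : f y ≤ g y := by
  obtain ⟨μ, ⟨hμ₀, hμ₁⟩, rfl⟩ := exists_lineMap_eq_of_mem_Icc hcd hy
  rw [apply_lineMap, apply_lineMap]
  exact lineMap_mono_endpoints hc hd hμ₀ hμ₁

variable (c d f g) in
lemma convex_setOf_fst_mem_Icc_affine :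
    Convex ℝ {z : ℝ × ℝ | z.2 ∈ Icc c d ∧ z.1 ∈ Icc (f z.2) (g z.2)} := by
  rintro z ⟨hz, hfz, hzg⟩ w ⟨hw, hfw, hwg⟩ a b ha hb hab
  refine ⟨convex_Icc c d hz hw ha hb hab, ?_⟩
  simp only [Prod.fst_add, Prod.snd_add, Prod.smul_fst, Prod.smul_snd, Convex.combo_affine_apply hab]
  simp only [smul_eq_mul, mem_Icc]
  constructor
  · nlinarith [mul_le_mul_of_nonneg_left hfz ha, mul_le_mul_of_nonneg_left hfw hb]
  · nlinarith [mul_le_mul_of_nonneg_left hzg ha, mul_le_mul_of_nonneg_left hwg hb]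

lemma trapezoid_eq (hcd : c ≤ d) (hc : f c ≤ g c) (hd : f d ≤ g d) :
    trapezoid c d f g = {z : ℝ × ℝ | z.2 ∈ Icc c d ∧ z.1 ∈ Icc (f z.2) (g z.2)} := by
  refine Subset.antisymm (convexHull_min ?_ (convex_setOf_fst_mem_Icc_affine c d f g)) ?_
  · simp only [insert_subset_iff, singleton_subset_iff, mem_ofPred_eq, mem_Icc]
    exact ⟨⟨⟨le_rfl, hcd⟩, le_rfl, hc⟩, ⟨⟨le_rfl, hcd⟩, hc, le_rfl⟩, ⟨⟨hcd, le_rfl⟩, hd, le_rfl⟩,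
      ⟨⟨hcd, le_rfl⟩, le_rfl, hd⟩⟩
  · rintro ⟨x, y⟩ ⟨hy, hx⟩
    obtain ⟨μ, hμ, rfl⟩ := exists_lineMap_eq_of_mem_Icc hcd hy
    -- the horizontal segment through `(x, y)` joins a point of each slanted side
    have hside : ∀ h : ℝ →ᵃ[ℝ] ℝ, (h (lineMap c d μ), lineMap c d μ) ∈
        segment ℝ (h c, c) (h d, d) := fun h => by
      rw [segment_eq_image_lineMap]
      exact ⟨μ, hμ, by rw [apply_lineMap]; simp [lineMap_apply]⟩
    have hmid : (x, lineMap c d μ) ∈ segment ℝ (f (lineMap c d μ), lineMap c d μ)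
        (g (lineMap c d μ), lineMap c d μ) := by
      rw [← Prod.image_mk_segment_left, segment_eq_Icc (hx.1.trans hx.2)]
      exact ⟨x, hx, rfl⟩
    refine (convex_convexHull ℝ _).segment_subset ?_ ?_ hmid
    · exact segment_subset_convexHull (by simp) (by simp) (hside f)
    · exact segment_subset_convexHull (by simp) (by simp) (hside g)

lemma trapezoid_subset_univ_prod_Icc (hcd : c ≤ d) : trapezoid c d f g ⊆ univ ×ˢ Icc c d :=
  convexHull_min (by simp [insert_subset_iff, hcd]) (convex_univ.prod (convex_Icc c d))

lemma trapezoid_union_trapezoid_of_le_of_le (hcm : c ≤ m) (hmd : m ≤ d) (hc : f c ≤ g c)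
    (hd : f d ≤ g d) : trapezoid c m f g ∪ trapezoid m d f g = trapezoid c d f g := by
  have hm : f m ≤ g m := f.apply_le_apply_of_mem_Icc (hcm.trans hmd) hc hd ⟨hcm, hmd⟩
  rw [trapezoid_eq hcm hc hm, trapezoid_eq hmd hm hd, trapezoid_eq (hcm.trans hmd) hc hd]
  ext z
  simp only [mem_union, mem_ofPred_eq]
  rw [← or_and_right, ← mem_union, Icc_union_Icc_eq_Icc hcm hmd]

lemma disjoint_interior_trapezoid_of_le_of_le (hcm : c ≤ m) (hmd : m ≤ d) :
    Disjoint (interior (trapezoid c m f g)) (interior (trapezoid m d f g)) := by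
  refine .mono (interior_mono (trapezoid_subset_univ_prod_Icc hcm))
    (interior_mono (trapezoid_subset_univ_prod_Icc hmd)) ?_
  simp only [interior_prod_eq, interior_univ, interior_Icc]
  exact disjoint_prod.2 (.inr (Ioo_disjoint_Ioo.2 ((min_le_left _ _).trans (le_max_right _ _))))

lemma trapezoid_union_trapezoid_of_sides_le (hcd : c ≤ d) (hfk_c : f c ≤ k c)
    (hkg_c : k c ≤ g c) (hfk_d : f d ≤ k d) (hkg_d : k d ≤ g d) :
    trapezoid c d f k ∪ trapezoid c d k g = trapezoid c d f g := by
  rw [trapezoid_eq hcd hfk_c hfk_d, trapezoid_eq hcd hkg_c hkg_d,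
    trapezoid_eq hcd (hfk_c.trans hkg_c) (hfk_d.trans hkg_d)]
  ext ⟨x, y⟩
  simp only [mem_union, mem_ofPred_eq]
  constructor
  · rintro (⟨hy, hfx, hxk⟩ | ⟨hy, hkx, hxg⟩)
    · exact ⟨hy, hfx, hxk.trans (k.apply_le_apply_of_mem_Icc hcd hkg_c hkg_d hy)⟩
    · exact ⟨hy, (f.apply_le_apply_of_mem_Icc hcd hfk_c hfk_d hy).trans hkx, hxg⟩
  · rintro ⟨hy, hfx, hxg⟩
    rcases le_total x (k y) with hxk | hkx
    · exact .inl ⟨hy, hfx, hxk⟩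
    · exact .inr ⟨hy, hkx, hxg⟩

lemma disjoint_interior_trapezoid_of_sides_le (hcd : c ≤ d) (hfk_c : f c ≤ k c)
    (hkg_c : k c ≤ g c) (hfk_d : f d ≤ k d) (hkg_d : k d ≤ g d) :
    Disjoint (interior (trapezoid c d f k)) (interior (trapezoid c d k g)) := by
  rw [trapezoid_eq hcd hfk_c hfk_d, trapezoid_eq hcd hkg_c hkg_d]
  exact (disjoint_interior_setOf_fst_le k).mono (interior_mono fun z hz => hz.2.2)
    (interior_mono fun z hz => hz.2.1)

end Trapezoid

lemma affineCopy_Tg_convexHull {r : ℝ} {A B C D : ℝ × ℝ} (hC : C - D = r • (B - A))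
    (hAB_AD : (B - A).1 * (D - A).2 - (B - A).2 * (D - A).1 ≠ 0) :
    AffineCopy (Tg r) (convexHull ℝ {A, B, C, D}) := by
  set u := B - A
  set v := D - A with hv
  let L : ℝ × ℝ →ₗ[ℝ] ℝ × ℝ := (LinearMap.id.smulRight u).coprod (LinearMap.id.smulRight v)
  have hL : Function.Injective L := by
    refine (injective_iff_map_eq_zero L).2 fun ⟨x, y⟩ hxy => ?_
    have h₁ : x * u.1 + y * v.1 = 0 := congrArg Prod.fst hxy
    have h₂ : x * u.2 + y * v.2 = 0 := congrArg Prod.snd hxy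
    -- Cramer's rule
    have hx : x * (u.1 * v.2 - u.2 * v.1) = 0 := by linear_combination v.2 * h₁ - v.1 * h₂
    have hy : y * (u.1 * v.2 - u.2 * v.1) = 0 := by linear_combination u.1 * h₂ - u.2 * h₁
    simp [(mul_eq_zero.1 hx).resolve_right hAB_AD, (mul_eq_zero.1 hy).resolve_right hAB_AD]
  let φ := (LinearEquiv.ofInjectiveEndo L hL).toAffineEquiv.trans (AffineEquiv.constVAdd ℝ _ A)
  have hφ : ∀ z, φ z = A + (z.1 • u + z.2 • v) := fun z => rfl
  refine ⟨φ, ?_⟩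
  rw [Tg, ← AffineEquiv.coe_toAffineMap, AffineMap.image_convexHull]
  congr 1
  have hC' : C = A + (r • u + v) := by rw [eq_add_of_sub_eq hC, hv]; abel
  simp only [image_insert_eq, image_singleton, AffineEquiv.coe_toAffineMap, hφ]
  simp [u, v, hC']

def HasDissectionInto (S A B : Set (ℝ × ℝ)) : Prop :=
  ∃ P₁ P₂ : Set (ℝ × ℝ), P₁ ∪ P₂ = S ∧ Disjoint (interior P₁) (interior P₂) ∧
    AffineCopy A P₁ ∧ AffineCopy B P₂

lemma HasDissectionInto.symm {S A B : Set (ℝ × ℝ)} (h : HasDissectionInto S A B) :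
    HasDissectionInto S B A := by
  obtain ⟨P₁, P₂, hS, hdisj, hA, hB⟩ := h
  exact ⟨P₂, P₁, union_comm P₁ P₂ ▸ hS, hdisj.symm, hB, hA⟩

lemma Tg_eq_trapezoid (γ : ℝ) : Tg γ = trapezoid 0 1 (const ℝ ℝ 0) (lineMap 1 γ) := by
  simp [Tg, trapezoid]

lemma Tg_one : Tg 1 = Icc (0, 0) (1, 1) := by
  rw [Tg_eq_trapezoid, lineMap_same, trapezoid_eq zero_le_one zero_le_one zero_le_one,
    ← Icc_prod_Icc]
  ext ⟨x, y⟩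
  simp only [mem_ofPred_eq, mem_prod, mem_Icc]
  tauto

lemma hasDissectionInto_Tg_mul {γ₁ γ₂ : ℝ} (h₁ : 0 < γ₁) (h₂ : γ₁ < 1) (h₃ : 0 < γ₂)
    (h₄ : γ₂ < 1) : HasDissectionInto (Tg (γ₁ * γ₂)) (Tg γ₁) (Tg γ₂) := by
  have hd : 0 < 1 - γ₁ * γ₂ := by nlinarith
  set t := (1 - γ₁) / (1 - γ₁ * γ₂)
  have ht₀ : 0 < t := div_pos (by linarith) hd
  have ht₁ : t < 1 := (div_lt_one hd).2 (by nlinarith)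
  set g : ℝ →ᵃ[ℝ] ℝ := lineMap 1 (γ₁ * γ₂)
  have hgt : g t = γ₁ := by
    simp only [g, t, lineMap_apply_ring']
    field_simp
    ring
  rw [Tg_eq_trapezoid]
  refine ⟨trapezoid 0 t (const ℝ ℝ 0) g, trapezoid t 1 (const ℝ ℝ 0) g,
    trapezoid_union_trapezoid_of_le_of_le ht₀.le ht₁.le (by simp [g]) (by simp [g]; positivity),
    disjoint_interior_trapezoid_of_le_of_le ht₀.le ht₁.le, ?_, ?_⟩
  · apply affineCopy_Tg_convexHull <;> simp [g, hgt, ht₀.ne']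
  · apply affineCopy_Tg_convexHull
    · simp [g, hgt, mul_comm]
    · simp [hgt, h₁.ne', (sub_pos.2 ht₁).ne']

lemma hasDissectionInto_Tg_of_lt {γ₁ γ₂ γ : ℝ} (h₁ : 0 < γ₁) (h₃ : 0 < γ₂) (h₄ : γ₂ < 1)
    (hγ₁ : γ₁ < γ) (hγ : γ ≤ 1) : HasDissectionInto (Tg γ) (Tg γ₁) (Tg γ₂) := by
  have hd : 0 < 1 - γ₁ * γ₂ := by nlinarith
  set p := (1 - γ₂ * γ) / (1 - γ₁ * γ₂)
  have hp : p * (1 - γ₁ * γ₂) = 1 - γ₂ * γ := div_mul_cancel₀ _ hd.ne'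
  have hp₀ : 0 < p := div_pos (by nlinarith) hd
  have hp₁ : p ≤ 1 := (div_le_one hd).2 (by nlinarith)
  have hq : γ₁ * p < γ := by nlinarith
  set g : ℝ →ᵃ[ℝ] ℝ := lineMap 1 γ
  set k : ℝ →ᵃ[ℝ] ℝ := lineMap p (γ₁ * p)
  have hk₀ : (const ℝ ℝ 0) 0 ≤ k 0 := by simpa [k] using hp₀.le
  have hk₁ : k 0 ≤ g 0 := by simpa [k, g] using hp₁
  have hk₂ : (const ℝ ℝ 0) 1 ≤ k 1 := by simp [k]; positivity
  have hk₃ : k 1 ≤ g 1 := by simpa [k, g] using hq.le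
  rw [Tg_eq_trapezoid]
  refine ⟨trapezoid 0 1 (const ℝ ℝ 0) k, trapezoid 0 1 k g,
    trapezoid_union_trapezoid_of_sides_le zero_le_one hk₀ hk₁ hk₂ hk₃,
    disjoint_interior_trapezoid_of_sides_le zero_le_one hk₀ hk₁ hk₂ hk₃, ?_, ?_⟩
  · apply affineCopy_Tg_convexHull <;> simp [k, hp₀.ne']
  · rw [show trapezoid 0 1 k g = convexHull ℝ {(γ, 1), (γ₁ * p, 1), (p, 0), (1, 0)} by
      simp only [trapezoid, k, g, lineMap_apply_zero, lineMap_apply_one]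
      congr 1
      ext
      simp only [mem_insert_iff, mem_singleton_iff]
      tauto]
    apply affineCopy_Tg_convexHull
    · ext
      · simp only [Prod.fst_sub, Prod.smul_fst, smul_eq_mul]
        linear_combination hp
      · simp
    · simp [(sub_pos.2 hq).ne']

/-- Combining `T(γ₁)` with `T(γ₂)`: (a) `T(γ₁γ₂)` splits into an affine copy of `T(γ₁)`
and an affine copy of `T(γ₂)`; (b) so does `T(γ)` for every `min{γ₁,γ₂} < γ < 1`;
(c) so does the unit square `[0,1]²`. -/
theorem Tg_combinations (γ₁ γ₂ : ℝ)
    (h₁ : 0 < γ₁) (h₂ : γ₁ < 1) (h₃ : 0 < γ₂) (h₄ : γ₂ < 1) :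
    (∃ P₁ P₂ : Set (ℝ × ℝ),
      P₁ ∪ P₂ = Tg (γ₁ * γ₂) ∧ Disjoint (interior P₁) (interior P₂) ∧
      AffineCopy (Tg γ₁) P₁ ∧ AffineCopy (Tg γ₂) P₂) ∧
    (∀ γ : ℝ, min γ₁ γ₂ < γ → γ < 1 →
      ∃ P₁ P₂ : Set (ℝ × ℝ),
        P₁ ∪ P₂ = Tg γ ∧ Disjoint (interior P₁) (interior P₂) ∧
        AffineCopy (Tg γ₁) P₁ ∧ AffineCopy (Tg γ₂) P₂) ∧
    (∃ P₁ P₂ : Set (ℝ × ℝ),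
      P₁ ∪ P₂ = Icc ((0 : ℝ), (0 : ℝ)) (1, 1) ∧ Disjoint (interior P₁) (interior P₂) ∧
      AffineCopy (Tg γ₁) P₁ ∧ AffineCopy (Tg γ₂) P₂) := by
  refine ⟨hasDissectionInto_Tg_mul h₁ h₂ h₃ h₄, fun γ hγmin hγ => ?_, ?_⟩
  · rcases min_lt_iff.1 hγmin with hγ₁ | hγ₂
    · exact hasDissectionInto_Tg_of_lt h₁ h₃ h₄ hγ₁ hγ.le
    · exact (hasDissectionInto_Tg_of_lt h₃ h₁ h₂ hγ₂ hγ.le).symm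
  · rw [← Tg_one]
    exact hasDissectionInto_Tg_of_lt h₁ h₃ h₄ h₂ le_rfl
end

section
/- Let 0 < α < β < 1 and consider the points a = (0,0), b = (1−α,0), c = (1−β, 1−(1−β)/(1−α)), d = (0, 1−α(1−β)/((1−α)β)) in ℝ². Then the midpoint (b + d)/2 lies on the straight line through a and c if and only if β(2−α) = 1. (This condition characterizes exactly when the quadrangle Q(α,β) is an affine image of a kite, since for these quadrangles only the diagonal ac can bisect the diagonal bd.) -/
theorem mem_affineSpan_zero_pair_iff {K V : Type*} [Ring K] [AddCommGroup V] [Module K V]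
    {p q : V} : p ∈ line[K, 0, q] ↔ ∃ r : K, r • q = p := by
  simpa using vadd_left_mem_affineSpan_pair (k := K) (p₁ := (0 : V)) (p₂ := q) (v := p)

theorem Prod.exists_smul_eq_iff_mul_eq_mul {K : Type*} [Field K] {p q : K × K} (hq : q ≠ 0) :
    (∃ r : K, r • q = p) ↔ p.1 * q.2 = p.2 * q.1 := by
  obtain ⟨q₁, q₂⟩ := q
  obtain ⟨p₁, p₂⟩ := p
  simp only [Prod.smul_mk, smul_eq_mul, Prod.mk.injEq]
  constructor
  · rintro ⟨r, rfl, rfl⟩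
    ring
  · intro hpq
    by_cases h₁ : q₁ = 0
    · have h₂ : q₂ ≠ 0 := fun h₂ => hq (by simp [h₁, h₂])
      refine ⟨p₂ / q₂, ?_, ?_⟩ <;> field_simp
      linear_combination -hpq
    · refine ⟨p₁ / q₁, ?_, ?_⟩ <;> field_simp
      linear_combination hpq

theorem mem_affineSpan_zero_pair_iff_mul_eq_mul {K : Type*} [Field K] {p q : K × K}
    (hq : q ≠ 0) : p ∈ line[K, 0, q] ↔ p.1 * q.2 = p.2 * q.1 := by
  rw [mem_affineSpan_zero_pair_iff, Prod.exists_smul_eq_iff_mul_eq_mul hq]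

/-- For `0 < α < β < 1` and the vertices `a = (0,0)`, `b = (1−α,0)`,
`c = (1−β, 1−(1−β)/(1−α))`, `d = (0, 1−α(1−β)/((1−α)β))` of `Q(α,β)`, the midpoint of
`b` and `d` lies on the straight line through `a` and `c` if and only if
`β(2−α) = 1`; i.e. `Q(α,β)` is an affine kite iff `β(2−α) = 1`. -/
theorem affine_kite_iff (α β : ℝ) (hα : 0 < α) (hαβ : α < β) (hβ : β < 1) :
    midpoint ℝ ((1 - α, 0) : ℝ × ℝ) ((0, 1 - α * (1 - β) / ((1 - α) * β)) : ℝ × ℝ) ∈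
      affineSpan ℝ ({((0 : ℝ), (0 : ℝ)),
        ((1 - β, 1 - (1 - β) / (1 - α)) : ℝ × ℝ)} : Set (ℝ × ℝ)) ↔
    β * (2 - α) = 1 := by
  have hα₁ : 1 - α ≠ 0 := by linarith
  have hβ₁ : 1 - β ≠ 0 := by linarith
  have hβ₀ : β ≠ 0 := by linarith
  have hβα : β - α ≠ 0 := by linarith
  rw [Prod.mk_zero_zero, mem_affineSpan_zero_pair_iff_mul_eq_mul (by simp [hβ₁])]
  simp only [midpoint_eq_smul_add, Prod.fst_add, Prod.snd_add, Prod.smul_fst, Prod.smul_snd,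
    smul_eq_mul, invOf_eq_inv, add_zero, zero_add]
  field_simp
  -- both sides of the cross-product equation carry the factor `β - α`
  constructor
  · intro h
    exact mul_left_cancel₀ hβα (by linear_combination h)
  · intro h
    linear_combination (β - α) * h
end

section
/- Let D ⊆ ℝ² be a compact set with nonempty interior. Then there exist a point x₀ ∈ ℝ², a radius r > 0 with the closed ball B(x₀, r) contained in D, and a real number μ ∈ (0,1), such that for every affine map β : ℝ² → ℝ the following two inequalities hold: the minimum of β over B(x₀, r) is at least (1−μ)·(min of β over D) + μ·(max of β over D), and the maximum of β over B(x₀, r) is at most (1−μ)·(max of β over D) + μ·(min of β over D). -/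
open Set

/-- Localization lemma: for every compact `D ⊆ ℝ²` with nonempty interior there is a
closed ball `B(x₀,r) ⊆ D` and a `μ ∈ (0,1)` such that for every affine functional
`β : ℝ² → ℝ` the range of `β` on `B(x₀,r)` lies within the range of `β` on `D`,
shrunk on each side by the fraction `μ`. -/
theorem localization_lemma (D : Set (ℝ × ℝ)) (hD : IsCompact D)
    (hint : (interior D).Nonempty) :
    ∃ (x₀ : ℝ × ℝ) (r μ : ℝ), 0 < r ∧ Metric.closedBall x₀ r ⊆ D ∧ 0 < μ ∧ μ < 1 ∧
      ∀ β : (ℝ × ℝ) →ᵃ[ℝ] ℝ,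
        (1 - μ) * sInf (β '' D) + μ * sSup (β '' D) ≤
            sInf (β '' Metric.closedBall x₀ r) ∧
        sSup (β '' Metric.closedBall x₀ r) ≤
            (1 - μ) * sSup (β '' D) + μ * sInf (β '' D) := by
  obtain ⟨x₀, hx₀⟩ := hint
  obtain ⟨ε, hε, hball⟩ := Metric.isOpen_iff.mp isOpen_interior x₀ hx₀
  have hsub2 : Metric.closedBall x₀ (ε/2) ⊆ D := fun x hx => by
    refine interior_subset (hball ?_)
    simp only [Metric.mem_closedBall] at hx
    simp only [Metric.mem_ball]
    linarith
  have hsub : Metric.closedBall x₀ (ε/4) ⊆ D := fun x hx =>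
    hsub2 (Metric.closedBall_subset_closedBall (by linarith) hx)
  -- circumradius
  obtain ⟨R₀, hR₀⟩ := hD.isBounded.subset_closedBall x₀
  set R : ℝ := max R₀ ε with hRdef
  have hRpos : 0 < R := lt_of_lt_of_le hε (le_max_right _ _)
  have hRε : ε ≤ R := le_max_right _ _
  have hDR : D ⊆ Metric.closedBall x₀ R :=
    hR₀.trans (Metric.closedBall_subset_closedBall (le_max_left _ _))
  set r : ℝ := ε/4 with hrdef
  have hrpos : 0 < r := by positivity
  set μ : ℝ := r / (2*R) with hμdef
  have hμpos : 0 < μ := by positivity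
  have hμlt : μ < 1 := by
    rw [hμdef, div_lt_one (by positivity)]
    have : r < ε := by rw [hrdef]; linarith
    linarith
  refine ⟨x₀, r, μ, hrpos, hsub, hμpos, hμlt, ?_⟩
  intro β
  set L := β.linear with hL
  have hcont : Continuous β := β.continuous_of_finiteDimensional
  have hLcont : Continuous L := L.continuous_of_finiteDimensional
  have hbddA : BddAbove (β '' D) := (hD.image hcont).bddAbove
  have hbddB : BddBelow (β '' D) := (hD.image hcont).bddBelow
  set m := sInf (β '' D) with hm
  set M := sSup (β '' D) with hM
  set c := β x₀ with hc
  -- maximum of the linear part on the unit ball is attained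
  obtain ⟨u, hu, humax⟩ := (isCompact_closedBall (0 : ℝ × ℝ) 1).exists_isMaxOn
    ⟨0, Metric.mem_closedBall_self zero_le_one⟩ hLcont.continuousOn
  set S : ℝ := L u with hS
  have hunorm : ‖u‖ ≤ 1 := by simpa [dist_eq_norm] using hu
  have hS0 : 0 ≤ S := by
    have := humax (Metric.mem_closedBall_self zero_le_one)
    simpa using this
  -- scaling bound : for ‖w‖ ≤ a, L w ≤ a * S
  have hup : ∀ (a : ℝ) (w : ℝ × ℝ), 0 < a → ‖w‖ ≤ a → L w ≤ a * S := by
    intro a w ha hw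
    have h1 : ‖a⁻¹ • w‖ ≤ 1 := by
      rw [norm_smul, norm_inv, Real.norm_eq_abs, abs_of_pos ha]
      rw [inv_mul_le_iff₀ ha]; linarith
    have h2 : L (a⁻¹ • w) ≤ S := humax (by simpa [dist_eq_norm] using h1)
    have h3 : L w = a * L (a⁻¹ • w) := by
      rw [map_smul, smul_eq_mul, ← mul_assoc, mul_inv_cancel₀ ha.ne', one_mul]
    rw [h3]
    exact mul_le_mul_of_nonneg_left h2 ha.le
  have hlo : ∀ (a : ℝ) (w : ℝ × ℝ), 0 < a → ‖w‖ ≤ a → -(a * S) ≤ L w := by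
    intro a w ha hw
    have := hup a (-w) ha (by simpa using hw)
    simp only [map_neg] at this
    linarith
  -- value of β at x₀ + w
  have hβval : ∀ w : ℝ × ℝ, β (w + x₀) = L w + c := by
    intro w
    have := β.map_vadd x₀ w
    simpa using this
  -- extremal points inside D at distance 2r
  have hM2 : c + 2*r*S ≤ M := by
    have hmem : ((2*r) • u + x₀) ∈ D := by
      apply hsub2
      simp only [Metric.mem_closedBall, dist_eq_norm, add_sub_cancel_right, norm_smul,
        Real.norm_eq_abs, abs_of_pos (by positivity : (0:ℝ) < 2*r)]
      calc 2*r*‖u‖ ≤ 2*r*1 := by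
            exact mul_le_mul_of_nonneg_left hunorm (by positivity)
        _ ≤ ε/2 := by rw [hrdef]; ring_nf; linarith
    have := le_csSup hbddA ⟨_, hmem, rfl⟩
    rw [hβval] at this
    rw [map_smul, smul_eq_mul] at this
    linarith
  have hm2 : m ≤ c - 2*r*S := by
    have hmem : ((-(2*r)) • u + x₀) ∈ D := by
      apply hsub2
      simp only [Metric.mem_closedBall, dist_eq_norm, add_sub_cancel_right, norm_smul,
        Real.norm_eq_abs, abs_neg, abs_of_pos (by positivity : (0:ℝ) < 2*r)]
      calc 2*r*‖u‖ ≤ 2*r*1 := by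
            exact mul_le_mul_of_nonneg_left hunorm (by positivity)
        _ ≤ ε/2 := by rw [hrdef]; ring_nf; linarith
    have := csInf_le hbddB ⟨_, hmem, rfl⟩
    rw [hβval] at this
    rw [map_smul, smul_eq_mul] at this
    linarith
  -- global bounds on β over D
  have hDne : (β '' D).Nonempty := ⟨β x₀, x₀, interior_subset hx₀, rfl⟩
  have hMup : M ≤ c + R*S := by
    apply csSup_le hDne
    rintro y ⟨d, hd, rfl⟩
    have hdist : ‖d - x₀‖ ≤ R := by
      have := hDR hd
      simpa [dist_eq_norm] using this
    have := hup R (d - x₀) hRpos hdist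
    have heq : β d = L (d - x₀) + c := by
      have := hβval (d - x₀); simpa using this
    rw [heq]; linarith
  have hmlo : c - R*S ≤ m := by
    apply le_csInf hDne
    rintro y ⟨d, hd, rfl⟩
    have hdist : ‖d - x₀‖ ≤ R := by
      have := hDR hd
      simpa [dist_eq_norm] using this
    have h1 := hlo R (d - x₀) hRpos hdist
    have heq : β d = L (d - x₀) + c := by
      have := hβval (d - x₀); simpa using this
    rw [heq]; linarith
  -- key product bound
  have hμMm : μ * (M - m) ≤ r * S := by
    have h1 : M - m ≤ 2*R*S := by linarith
    have h2 : μ * (M - m) ≤ μ * (2*R*S) := mul_le_mul_of_nonneg_left h1 hμpos.le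
    have h3 : μ * (2*R*S) = r * S := by
      rw [hμdef]; field_simp
    linarith
  -- pointwise bounds on the small ball
  have hptsub : ∀ x ∈ Metric.closedBall x₀ r, c - r*S ≤ β x ∧ β x ≤ c + r*S := by
    intro x hx
    simp only [Metric.mem_closedBall, dist_eq_norm] at hx
    have heq : β x = L (x - x₀) + c := by
      have := hβval (x - x₀); simpa using this
    have h1 := hup r (x - x₀) hrpos hx
    have h2 := hlo r (x - x₀) hrpos hx
    rw [heq]; constructor <;> linarith
  have hx₀ball : x₀ ∈ Metric.closedBall x₀ r := Metric.mem_closedBall_self hrpos.le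
  have hne : (β '' Metric.closedBall x₀ r).Nonempty := ⟨β x₀, x₀, hx₀ball, rfl⟩
  have hexpand1 : (1 - μ) * m + μ * M = m + μ * (M - m) := by ring
  have hexpand2 : (1 - μ) * M + μ * m = M - μ * (M - m) := by ring
  constructor
  · have h := le_csInf hne (fun y hy => by
      obtain ⟨x, hx, rfl⟩ := hy
      exact (hptsub x hx).1)
    rw [hexpand1]
    linarith
  · have h := csSup_le hne (fun y hy => by
      obtain ⟨x, hx, rfl⟩ := hy
      exact (hptsub x hx).2)
    rw [hexpand2]
    linarith
end

section
/- Let D ⊆ ℝ² be a nonempty compact connected set with nonempty interior, and let ψ₁, ψ₂, … : ℝ² → ℝ² be affine maps such that ψ₁(D) ⊆ D, ψ_{k+1}(D) ⊆ ψ_k(D) for every k ≥ 1, and the determinants of the linear parts of the ψ_k converge to 0 as k → ∞. Then the intersection S = ⋂_{k≥1} ψ_k(D) is a nonempty compact connected set contained in some affine line of ℝ²; in particular, S is a single point or a line segment. -/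
/-!
The set `S = ⋂ ψ_k(D)` lies in `⋂ ψ_k(conv D)`, a convex set whose area is at most
`|det ψ_k| · area(conv D)` for every `k`, hence zero; a convex planar set of area zero has empty
interior, so it spans at most a line `ℓ`. Choosing a continuous left inverse `g` of a
parametrisation of `ℓ`, compactness of the nested sets gives `g(S) = ⋂ g(ψ_k(D))`, an intersection
of intervals, so `g(S)` is a compact interval and `S` is its image, a segment.
-/

open Set Filter Topology MeasureTheory Module

section Measure

variable {E : Type*} [NormedAddCommGroup E] [NormedSpace ℝ E] [MeasurableSpace E]
  [FiniteDimensional ℝ E] (μ : Measure E) [μ.IsAddHaarMeasure]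

theorem addHaar_image_affineMap [BorelSpace E] (f : E →ᵃ[ℝ] E) (s : Set E) :
    μ (f '' s) = ENNReal.ofReal |LinearMap.det f.linear| * μ s := by
  have hf : ⇑f = (· + f 0) ∘ f.linear := funext fun x => congrFun f.decomp x
  rw [hf, image_comp, image_add_right, measure_preimage_add_right,
    Measure.addHaar_image_linearMap]

theorem addHaar_iInter_image_affineMap_eq_zero [BorelSpace E] {ι : Type*} {l : Filter ι}
    [l.NeBot] {f : ι → E →ᵃ[ℝ] E} (hdet : Tendsto (fun i => LinearMap.det (f i).linear) l (𝓝 0))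
    {s : Set E} (hs : μ s ≠ ⊤) : μ (⋂ i, f i '' s) = 0 := by
  have hbound : Tendsto (fun i => ENNReal.ofReal |LinearMap.det (f i).linear| * μ s) l (𝓝 0) := by
    simpa using ENNReal.Tendsto.mul_const (ENNReal.tendsto_ofReal hdet.abs) (Or.inr hs)
  refine le_zero_iff.1 (ge_of_tendsto hbound (Eventually.of_forall fun i => ?_))
  rw [← addHaar_image_affineMap]
  exact measure_mono (iInter_subset _ i)

theorem Convex.affineSpan_ne_top_of_addHaar_eq_zero {s : Set E} (hs : Convex ℝ s) (h : μ s = 0) :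
    affineSpan ℝ s ≠ ⊤ := fun htop =>
  (Measure.measure_pos_of_nonempty_interior μ
    (hs.interior_nonempty_iff_affineSpan_eq_top.2 htop)).ne' h

end Measure

section Collinear

variable {k V P : Type*} [DivisionRing k] [AddCommGroup V] [Module k V] [AddTorsor V P]

theorem collinear_of_affineSpan_ne_top [FiniteDimensional k V] (hV : finrank k V = 2)
    {s : Set P} (h : affineSpan k s ≠ ⊤) : Collinear k s := by
  rcases s.eq_empty_or_nonempty with rfl | hs
  · exact collinear_empty k P
  rw [Ne, AffineSubspace.affineSpan_eq_top_iff_vectorSpan_eq_top_of_nonempty k V P hs] at h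
  have := Submodule.finrank_lt h
  rw [collinear_iff_finrank_le_one]
  omega

theorem Collinear.exists_subset_affineSpan_pair [Nontrivial P] {s : Set P} (h : Collinear k s) :
    ∃ a b : P, a ≠ b ∧ s ⊆ line[k, a, b] := by
  rcases s.subsingleton_or_nontrivial with hsub | ⟨a, ha, b, hb, hab⟩
  · rcases s.eq_empty_or_nonempty with rfl | ⟨a, ha⟩
    · obtain ⟨a, b, hab⟩ := exists_pair_ne P
      exact ⟨a, b, hab, empty_subset _⟩
    obtain ⟨b, hb⟩ := exists_ne a
    refine ⟨a, b, hb.symm, ?_⟩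
    rw [hsub.eq_singleton_of_mem ha, singleton_subset_iff]
    exact left_mem_affineSpan_pair k a b
  · exact ⟨a, b, hab, (h.affineSpan_eq_of_ne ha hb hab).symm ▸ subset_affineSpan k s⟩

end Collinear

section Line

variable {E : Type*} [NormedAddCommGroup E] [NormedSpace ℝ E]

theorem exists_continuous_leftInvOn_lineMap {a b : E} (hab : a ≠ b) :
    ∃ g : E → ℝ, Continuous g ∧
      LeftInvOn (AffineMap.lineMap a b : ℝ → E) g (line[ℝ, a, b] : Set E) := by
  obtain ⟨ℓ, hℓ⟩ := SeparatingDual.exists_eq_one (R := ℝ) (sub_ne_zero.2 hab.symm)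
  refine ⟨fun x => ℓ (x - a), by fun_prop, fun x hx => ?_⟩
  obtain ⟨t, rfl⟩ := mem_affineSpan_pair_iff_exists_lineMap_eq.1 hx
  simp [AffineMap.lineMap_apply_module', hℓ]

theorem image_iInter_of_directed_isCompact {X Y ι : Type*} [TopologicalSpace X] [T2Space X]
    [TopologicalSpace Y] [T1Space Y] [Nonempty ι] {g : X → Y} (hg : Continuous g)
    {K : ι → Set X} (hdir : Directed (· ⊇ ·) K) (hK : ∀ i, IsCompact (K i)) :
    g '' ⋂ i, K i = ⋂ i, g '' K i := by
  refine (image_iInter_subset K g).antisymm fun y hy => ?_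
  have hfiber : ∀ i, (K i ∩ g ⁻¹' {y}).Nonempty := fun i => by
    obtain ⟨x, hx, rfl⟩ := mem_iInter.1 hy i
    exact ⟨x, hx, rfl⟩
  have hfiber_compact : ∀ i, IsCompact (K i ∩ g ⁻¹' {y}) := fun i =>
    (hK i).inter_right (isClosed_singleton.preimage hg)
  obtain ⟨x, hx⟩ := IsCompact.nonempty_iInter_of_directed_nonempty_isCompact_isClosed _
    (hdir.mono_comp _ fun _ _ h => inter_subset_inter_left _ h) hfiber hfiber_compact
    fun i => (hfiber_compact i).isClosed
  rw [mem_iInter] at hx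
  exact ⟨x, mem_iInter.2 fun i => (hx i).1, (hx (Classical.arbitrary ι)).2⟩

theorem isConnected_iInter_of_subset_affineSpan_pair {ι : Type*} [Nonempty ι] {K : ι → Set E}
    (hdir : Directed (· ⊇ ·) K) (hK : ∀ i, IsCompact (K i)) (hconn : ∀ i, IsConnected (K i))
    {a b : E} (hab : a ≠ b) (hline : ⋂ i, K i ⊆ line[ℝ, a, b]) : IsConnected (⋂ i, K i) := by
  obtain ⟨g, hg, hinv⟩ := exists_continuous_leftInvOn_lineMap hab
  have hne : (⋂ i, K i).Nonempty :=
    IsCompact.nonempty_iInter_of_directed_nonempty_isCompact_isClosed K hdir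
      (fun i => (hconn i).nonempty) hK fun i => (hK i).isClosed
  have hord : OrdConnected (g '' ⋂ i, K i) := by
    rw [image_iInter_of_directed_isCompact hg hdir hK]
    exact ordConnected_iInter fun i =>
      ((hconn i).image g hg.continuousOn).isPreconnected.ordConnected
  rw [← hinv.image_image' hline]
  exact ⟨(hne.image g).image _,
    hord.isPreconnected.image _ AffineMap.lineMap_continuous.continuousOn⟩

theorem IsConnected.exists_eq_segment_of_subset_affineSpan_pair {S : Set E}
    (hconn : IsConnected S) (hcomp : IsCompact S) {a b : E} (hab : a ≠ b)
    (hline : S ⊆ line[ℝ, a, b]) :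
    ∃ x y : E, S = segment ℝ x y := by
  obtain ⟨g, hg, hinv⟩ := exists_continuous_leftInvOn_lineMap hab
  set T := g '' S
  have hT : T = Icc (sInf T) (sSup T) :=
    eq_Icc_of_connected_compact (hconn.image g hg.continuousOn) (hcomp.image hg)
  have hle : sInf T ≤ sSup T := nonempty_Icc.1 ((hconn.nonempty.image g).mono hT.subset)
  refine ⟨AffineMap.lineMap a b (sInf T), AffineMap.lineMap a b (sSup T), ?_⟩
  rw [← image_segment, segment_eq_uIcc, uIcc_of_le hle, ← hT, hinv.image_image' hline]

end Line

theorem limit_set_is_point_or_segment_general (D : Set (ℝ × ℝ))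
    (hcomp : IsCompact D) (hconn : IsConnected D)
    (ψ : ℕ → ((ℝ × ℝ) →ᵃ[ℝ] (ℝ × ℝ)))
    (hnest : ∀ k : ℕ, ψ (k + 1) '' D ⊆ ψ k '' D)
    (hdet : Filter.Tendsto (fun k => LinearMap.det (ψ k).linear)
      Filter.atTop (nhds 0)) :
    (⋂ k, ψ k '' D).Nonempty ∧ IsCompact (⋂ k, ψ k '' D) ∧
    IsConnected (⋂ k, ψ k '' D) ∧
    (∃ a b : ℝ × ℝ, a ≠ b ∧
      (⋂ k, ψ k '' D) ⊆ (affineSpan ℝ ({a, b} : Set (ℝ × ℝ)) : Set (ℝ × ℝ))) ∧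
    ∃ x y : ℝ × ℝ, (⋂ k, ψ k '' D) = segment ℝ x y := by
  have hK : ∀ k, IsCompact (ψ k '' D) := fun k => hcomp.image (ψ k).continuous_of_finiteDimensional
  have hdir : Directed (· ⊇ ·) fun k => ψ k '' D := (antitone_nat_of_succ_le hnest).directed_ge
  have hS : IsCompact (⋂ k, ψ k '' D) :=
    (hK 0).of_isClosed_subset (isClosed_iInter fun k => (hK k).isClosed) (iInter_subset _ 0)
  have hnull : volume (⋂ k, ψ k '' convexHull ℝ D) = 0 :=
    addHaar_iInter_image_affineMap_eq_zero volume hdet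
      (isBounded_convexHull.2 hcomp.isBounded).measure_lt_top.ne
  have hconv : Convex ℝ (⋂ k, ψ k '' convexHull ℝ D) :=
    convex_iInter fun k => (convex_convexHull ℝ D).affine_image (ψ k)
  obtain ⟨a, b, hab, hline⟩ := (collinear_of_affineSpan_ne_top (by simp)
    (hconv.affineSpan_ne_top_of_addHaar_eq_zero volume hnull)).exists_subset_affineSpan_pair
  have hSline : (⋂ k, ψ k '' D) ⊆ line[ℝ, a, b] :=
    (iInter_mono fun k => image_mono (subset_convexHull ℝ D)).trans hline
  have hSconn := isConnected_iInter_of_subset_affineSpan_pair hdir hK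
    (fun k => hconn.image _ (ψ k).continuous_of_finiteDimensional.continuousOn) hab hSline
  exact ⟨hSconn.nonempty, hS, hSconn, ⟨a, b, hab, hSline⟩,
    hSconn.exists_eq_segment_of_subset_affineSpan_pair hS hab hSline⟩

/-- Limit sets: if `D ⊆ ℝ²` is a nonempty compact connected set with nonempty interior
and `ψ₁, ψ₂, …` are affine maps with `ψ₁(D) ⊆ D`, `ψ_{k+1}(D) ⊆ ψ_k(D)` and
determinants of the linear parts tending to `0`, then `S = ⋂ₖ ψ_k(D)` is a nonempty
compact connected set contained in an affine line; in particular `S` is a (possibly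
degenerate) line segment, i.e. a single point or a segment. -/
theorem limit_set_is_point_or_segment (D : Set (ℝ × ℝ)) (hne : D.Nonempty)
    (hcomp : IsCompact D) (hconn : IsConnected D) (hint : (interior D).Nonempty)
    (ψ : ℕ → ((ℝ × ℝ) →ᵃ[ℝ] (ℝ × ℝ)))
    (h0 : ψ 0 '' D ⊆ D)
    (hnest : ∀ k : ℕ, ψ (k + 1) '' D ⊆ ψ k '' D)
    (hdet : Filter.Tendsto (fun k => LinearMap.det (ψ k).linear)
      Filter.atTop (nhds 0)) :
    (⋂ k, ψ k '' D).Nonempty ∧ IsCompact (⋂ k, ψ k '' D) ∧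
    IsConnected (⋂ k, ψ k '' D) ∧
    (∃ a b : ℝ × ℝ, a ≠ b ∧
      (⋂ k, ψ k '' D) ⊆ (affineSpan ℝ ({a, b} : Set (ℝ × ℝ)) : Set (ℝ × ℝ))) ∧
    ∃ x y : ℝ × ℝ, (⋂ k, ψ k '' D) = segment ℝ x y :=
  limit_set_is_point_or_segment_general D hcomp hconn ψ hnest hdet
end

section
/- Let P ⊆ ℝ² be a compact convex set with nonempty interior having exactly k₀ extreme points, where 3 ≤ k₀ < ∞. Suppose P = P₁ ∪ P₂, where P₁ and P₂ are compact convex sets with nonempty interiors, the interiors of P₁ and P₂ are disjoint, and P₁ and P₂ have exactly k₁ and k₂ extreme points respectively (both finite). Then k₁ + k₂ ∈ {k₀ + 2, k₀ + 3, k₀ + 4}. In particular, min{k₁, k₂} ≤ (k₀ + 4)/2, so if k₀ ≥ 5 then min{k₁, k₂} < k₀. -/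
/-!
Separating the interiors of `P₁` and `P₂` by a line `{f = c}` shows `P₁ = P ∩ {f ≤ c}` and
`P₂ = P ∩ {c ≤ f}`. Hence the cut `S = P₁ ∩ P₂ = P ∩ {f = c}` is a face of both pieces, and it is
a nondegenerate segment since the line meets the interior of `P`: `S` has exactly two extreme
points. An extreme point of `P₁` off `S` is extreme in `P`, because near it `P₁` and `P` coincide.
So `ext P₁ ∪ ext P₂ = ext P ∪ ext S` and `ext P₁ ∩ ext P₂ = ext S`, and inclusion–exclusion gives
`k₁ + k₂ = #(ext P ∪ ext S) + 2 ∈ [k₀ + 2, k₀ + 4]`.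
-/

open Set Filter Topology Function Module

section LinearAlgebra

variable {E : Type*} [AddCommGroup E] [Module ℝ E]

theorem isExtreme_inter_setOf_eq (P : Set E) (f : E →ₗ[ℝ] ℝ) (c : ℝ) :
    IsExtreme ℝ (P ∩ {x | f x ≤ c}) (P ∩ {x | f x = c}) := by
  refine ⟨fun x hx => ⟨hx.1, hx.2.le⟩, ?_⟩
  rintro x₁ ⟨hx₁, hf₁⟩ x₂ ⟨-, hf₂⟩ x ⟨-, hfx⟩ ⟨a, b, ha, hb, hab, rfl⟩
  obtain rfl : b = 1 - a := by linarith
  simp only [mem_ofPred_eq, map_add, map_smul, smul_eq_mul] at hf₁ hf₂ hfx ⊢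
  have : (1 - a) * f x₂ ≤ (1 - a) * c := mul_le_mul_of_nonneg_left hf₂ hb.le
  exact ⟨hx₁, hf₁.antisymm (le_of_mul_le_mul_left (by linarith) ha)⟩

theorem Module.Dual.exists_ker_eq_span_singleton {K V : Type*} [Field K] [AddCommGroup V]
    [Module K V] (hV : finrank K V = 2) {f : Dual K V} (hf : f ≠ 0) :
    ∃ u : V, u ≠ 0 ∧ LinearMap.ker f = K ∙ u := by
  have : FiniteDimensional K V := Module.finite_of_finrank_eq_succ hV
  have hker : finrank K (LinearMap.ker f) = 1 := by
    have := f.finrank_ker_add_one_of_ne_zero hf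
    omega
  obtain ⟨⟨u, hu⟩, hu0, hspan⟩ := finrank_eq_one_iff'.1 hker
  refine ⟨u, fun h => hu0 (Subtype.ext h),
    le_antisymm (fun v hv => ?_) ((Submodule.span_singleton_le_iff_mem u _).2 hu)⟩
  obtain ⟨t, ht⟩ := hspan ⟨v, hv⟩
  exact Submodule.mem_span_singleton.2 ⟨t, congrArg Subtype.val ht⟩

theorem AffineMap.image_extremePoints_of_injective {F : Type*} [AddCommGroup F] [Module ℝ F]
    (φ : E →ᵃ[ℝ] F) (hφ : Injective φ) (s : Set E) :
    φ '' s.extremePoints ℝ = (φ '' s).extremePoints ℝ := by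
  ext y
  constructor
  · rintro ⟨x, hx, rfl⟩
    refine ⟨mem_image_of_mem φ hx.1, ?_⟩
    rintro _ ⟨x₁, h₁, rfl⟩ _ ⟨x₂, h₂, rfl⟩ hseg
    rw [← image_openSegment, hφ.mem_set_image] at hseg
    exact congrArg φ (hx.2 h₁ h₂ hseg)
  · rintro ⟨⟨x, hx, rfl⟩, h⟩
    refine ⟨x, ⟨hx, fun x₁ h₁ x₂ h₂ hseg =>
      hφ (h (mem_image_of_mem φ h₁) (mem_image_of_mem φ h₂) ?_)⟩, rfl⟩
    rw [← image_openSegment]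
    exact mem_image_of_mem φ hseg

theorem extremePoints_inter_eq_of_isExtreme {P₁ P₂ : Set E} (h₁ : IsExtreme ℝ P₁ (P₁ ∩ P₂))
    (h₂ : IsExtreme ℝ P₂ (P₁ ∩ P₂)) :
    P₁.extremePoints ℝ ∩ P₂.extremePoints ℝ = (P₁ ∩ P₂).extremePoints ℝ := by
  refine Subset.antisymm (fun x hx => ?_)
    (subset_inter h₁.extremePoints_subset_extremePoints h₂.extremePoints_subset_extremePoints)
  rw [h₁.extremePoints_eq]
  exact ⟨⟨hx.1.1, hx.2.1⟩, hx.1⟩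

end LinearAlgebra

section Topology

variable {E : Type*} [AddCommGroup E] [Module ℝ E] [TopologicalSpace E]
  [IsTopologicalAddGroup E] [ContinuousSMul ℝ E]

theorem Convex.le_of_lt_on_interior {s : Set E} (hs : Convex ℝ s) (hs' : (interior s).Nonempty)
    {f g : E → ℝ} (hf : Continuous f) (hg : Continuous g) (h : ∀ x ∈ interior s, f x < g x) :
    ∀ x ∈ s, f x ≤ g x := fun _ hx =>
  closure_lt_subset_le hf hg <| closure_mono h <|
    (hs.closure_interior_eq_closure_of_nonempty_interior hs').symm ▸ subset_closure hx

theorem mem_extremePoints_of_inter_nhds_subset {A B U : Set E} {x : E} (hB : Convex ℝ B)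
    (hAB : A ⊆ B) (hU : U ∈ 𝓝 x) (hBU : B ∩ U ⊆ A) (hx : x ∈ A.extremePoints ℝ) :
    x ∈ B.extremePoints ℝ := by
  refine ⟨hAB hx.1, fun y hy z hz hxyz => ?_⟩
  -- pull `y` and `z` towards `x` until they land in `U`, hence in `A`
  have hnear : ∀ v, ∀ᶠ t in 𝓝[>] (0 : ℝ), x + t • (v - x) ∈ U := fun v => by
    have hcont : Continuous fun t : ℝ => x + t • (v - x) := by fun_prop
    have : Tendsto (fun t : ℝ => x + t • (v - x)) (𝓝 0) (𝓝 x) := by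
      simpa using hcont.tendsto 0
    exact nhdsWithin_le_nhds (this hU)
  obtain ⟨t, ⟨hyU, hzU⟩, ht₀, ht₁⟩ :=
    ((hnear y).and (hnear z)).and (Ioo_mem_nhdsGT one_pos) |>.exists
  have hA : ∀ v ∈ B, x + t • (v - x) ∈ U → x + t • (v - x) ∈ A := fun v hv hvU =>
    hBU ⟨hB.add_smul_sub_mem (hAB hx.1) hv ⟨ht₀.le, ht₁.le⟩, hvU⟩
  obtain ⟨a, b, ha, hb, hab, hxyz⟩ := hxyz
  have hseg : x ∈ openSegment ℝ (x + t • (y - x)) (x + t • (z - x)) :=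
    ⟨a, b, ha, hb, hab, by linear_combination (norm := module) t • hxyz + hab • ((1 - t) • x)⟩
  simpa [ht₀.ne', sub_eq_zero] using hx.2 (hA y hy hyU) (hA z hz hzU) hseg

theorem extremePoints_subset_union_of_isClosed {P Q R : Set E} (hP : Convex ℝ P)
    (hunion : P = Q ∪ R) (hR : IsClosed R) :
    Q.extremePoints ℝ ⊆ P.extremePoints ℝ ∪ (Q ∩ R).extremePoints ℝ := by
  intro x hx
  by_cases hxR : x ∈ R
  · exact Or.inr (inter_extremePoints_subset_extremePoints_of_subset inter_subset_left
      ⟨⟨hx.1, hxR⟩, hx⟩)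
  · refine Or.inl (mem_extremePoints_of_inter_nhds_subset hP (hunion ▸ subset_union_left)
      (hR.isOpen_compl.mem_nhds hxR) ?_ hx)
    rintro y ⟨hyP, hyR⟩
    exact (hunion ▸ hyP).resolve_right hyR

theorem extremePoints_union_eq_of_isExtreme {P P₁ P₂ : Set E} (hP : Convex ℝ P)
    (hunion : P = P₁ ∪ P₂) (hP₁ : IsClosed P₁) (hP₂ : IsClosed P₂)
    (h₁ : IsExtreme ℝ P₁ (P₁ ∩ P₂)) :
    P₁.extremePoints ℝ ∪ P₂.extremePoints ℝ = P.extremePoints ℝ ∪ (P₁ ∩ P₂).extremePoints ℝ := by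
  refine Subset.antisymm (union_subset (extremePoints_subset_union_of_isClosed hP hunion hP₂) ?_)
    (union_subset ?_ (h₁.extremePoints_subset_extremePoints.trans subset_union_left))
  · rw [inter_comm]
    exact extremePoints_subset_union_of_isClosed hP (hunion.trans (union_comm _ _)) hP₁
  · rintro x hx
    rcases hunion ▸ hx.1 with h | h
    · exact Or.inl (inter_extremePoints_subset_extremePoints_of_subset
        (hunion ▸ subset_union_left) ⟨h, hx⟩)
    · exact Or.inr (inter_extremePoints_subset_extremePoints_of_subset
        (hunion ▸ subset_union_right) ⟨h, hx⟩)

theorem eq_inter_setOf_le_of_union {P P₁ P₂ : Set E} (hP : Convex ℝ P) (hunion : P = P₁ ∪ P₂)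
    (hP₁ : IsClosed P₁) {f : StrongDual ℝ E} {c : ℝ} (h₁ : ∀ x ∈ P₁, f x ≤ c)
    (h₂ : ∀ x ∈ P₂, c ≤ f x) {w : E} (hw : w ∈ P₁) (hfw : f w < c) :
    P₁ = P ∩ {x | f x ≤ c} := by
  refine Subset.antisymm (fun x hx => ⟨hunion ▸ Or.inl hx, h₁ x hx⟩) ?_
  rintro x ⟨hxP, hfx : f x ≤ c⟩
  -- the open segment from `x` to `w` lies in `{f < c}`, which `P₂` does not meet
  have hseg : openSegment ℝ x w ⊆ P₁ := by
    rintro _ ⟨a, b, ha, hb, hab, rfl⟩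
    have hf : f (a • x + b • w) < c := by
      obtain rfl : a = 1 - b := by linarith
      simp only [map_add, map_smul, smul_eq_mul]
      nlinarith [mul_le_mul_of_nonneg_left hfx ha.le, mul_lt_mul_of_pos_left hfw hb]
    have hmem : a • x + b • w ∈ P := hP hxP (hunion ▸ Or.inl hw) ha.le hb.le hab
    exact (hunion ▸ hmem).resolve_right fun h => (h₂ _ h).not_gt hf
  exact hP₁.closure_subset_iff.2 hseg (segment_subset_closure_openSegment (left_mem_segment ℝ x w))

theorem exists_eq_inter_halfSpaces_of_disjoint_interior {P P₁ P₂ : Set E} (hP : Convex ℝ P)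
    (hunion : P = P₁ ∪ P₂) (hP₁ : IsClosed P₁) (hP₁conv : Convex ℝ P₁)
    (hP₁int : (interior P₁).Nonempty) (hP₂ : IsClosed P₂) (hP₂conv : Convex ℝ P₂)
    (hP₂int : (interior P₂).Nonempty) (hdisj : Disjoint (interior P₁) (interior P₂)) :
    ∃ f : StrongDual ℝ E, f ≠ 0 ∧ ∃ w ∈ interior P,
      P₁ = P ∩ {x | f x ≤ f w} ∧ P₂ = P ∩ {x | f w ≤ f x} := by
  obtain ⟨f, c, hlt₁, hlt₂⟩ := geometric_hahn_banach_open_open hP₁conv.interior isOpen_interior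
    hP₂conv.interior isOpen_interior hdisj
  obtain ⟨w₁, hw₁⟩ := hP₁int
  obtain ⟨w₂, hw₂⟩ := hP₂int
  have hle₁ : ∀ x ∈ P₁, f x ≤ c :=
    hP₁conv.le_of_lt_on_interior ⟨w₁, hw₁⟩ f.continuous continuous_const hlt₁
  have hle₂ : ∀ x ∈ P₂, c ≤ f x :=
    hP₂conv.le_of_lt_on_interior ⟨w₂, hw₂⟩ continuous_const f.continuous hlt₂
  have hw₁P : w₁ ∈ interior P := interior_mono (hunion ▸ subset_union_left) hw₁
  have hw₂P : w₂ ∈ interior P := interior_mono (hunion ▸ subset_union_right) hw₂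
  obtain ⟨w, hw, rfl⟩ : c ∈ f '' interior P :=
    hP.interior.isPreconnected.intermediate_value hw₁P hw₂P f.continuous.continuousOn
      ⟨(hlt₁ w₁ hw₁).le, (hlt₂ w₂ hw₂).le⟩
  refine ⟨f, fun hf => ?_, w, hw,
    eq_inter_setOf_le_of_union hP hunion hP₁ hle₁ hle₂ (interior_subset hw₁) (hlt₁ w₁ hw₁), ?_⟩
  · simpa [hf] using (hlt₁ w₁ hw₁).trans (hlt₂ w₂ hw₂)
  · simpa using eq_inter_setOf_le_of_union (f := -f) (c := -f w) hP
      (hunion.trans (union_comm _ _)) hP₂ (by simpa using hle₂) (by simpa using hle₁)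
      (interior_subset hw₂) (by simpa using hlt₂ w₂ hw₂)

end Topology

theorem Real.ncard_extremePoints_eq_two {T : Set ℝ} (hT : IsCompact T) (hconv : Convex ℝ T)
    (hint : (interior T).Nonempty) : (T.extremePoints ℝ).ncard = 2 := by
  have hIcc := eq_Icc_of_connected_compact (hconv.isConnected (hint.mono interior_subset)) hT
  rw [hIcc, interior_Icc, nonempty_Ioo] at hint
  rw [hIcc, extremePoints_Icc hint.le, ncard_pair hint.ne]

theorem ncard_extremePoints_inter_level_set {E : Type*} [AddCommGroup E] [Module ℝ E]
    [TopologicalSpace E] [IsTopologicalAddGroup E] [ContinuousSMul ℝ E] [T2Space E]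
    (hE : finrank ℝ E = 2) {P : Set E} (hP : IsCompact P) (hconv : Convex ℝ P)
    {f : StrongDual ℝ E} (hf : f ≠ 0) {w : E} (hw : w ∈ interior P) :
    ((P ∩ {x | f x = f w}).extremePoints ℝ).ncard = 2 := by
  obtain ⟨u, hu, hker⟩ := Module.Dual.exists_ker_eq_span_singleton hE (f := f.toLinearMap)
    (fun h => hf (ContinuousLinearMap.coe_injective h))
  let φ : ℝ →ᵃ[ℝ] E := (LinearMap.toSpanSingleton ℝ E u).toAffineMap + AffineMap.const ℝ ℝ w
  have hφ : IsClosedEmbedding φ := by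
    have : ⇑φ = (· + w) ∘ (· • u) := by ext t; simp [φ]
    exact this ▸ (Homeomorph.addRight w).isClosedEmbedding.comp (isClosedEmbedding_smul_left hu)
  have hline : {x | f x = f w} = range φ := by
    ext x
    rw [mem_ofPred_eq, ← sub_eq_zero, ← map_sub, ← ContinuousLinearMap.coe_coe, ← LinearMap.mem_ker,
      hker, Submodule.mem_span_singleton]
    simp [φ, eq_sub_iff_add_eq]
  rw [hline, ← image_preimage_eq_inter_range, ← φ.image_extremePoints_of_injective hφ.injective,
    ncard_image_of_injective _ hφ.injective]
  refine Real.ncard_extremePoints_eq_two (hφ.isCompact_preimage hP) (hconv.affine_preimage φ)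
    ⟨0, preimage_interior_subset_interior_preimage hφ.continuous ?_⟩
  simpa [φ] using hw

theorem ncard_add_ncard_bounds {α : Type*} {A B C D : Set α} (hA : A.Finite) (hB : B.Finite)
    (hunion : A ∪ B = C ∪ D) (hinter : A ∩ B = D) :
    C.ncard + D.ncard ≤ A.ncard + B.ncard ∧ A.ncard + B.ncard ≤ C.ncard + 2 * D.ncard := by
  have hsum := ncard_union_add_ncard_inter A B hA hB
  rw [hunion, hinter] at hsum
  have hC := ncard_le_ncard subset_union_left (hunion ▸ hA.union hB : (C ∪ D).Finite)
  have hCD := ncard_union_le C D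
  omega

theorem glass_cut_vertex_count_general (P P₁ P₂ : Set (ℝ × ℝ)) (k₀ k₁ k₂ : ℕ)
    (hP : IsCompact P) (hPconv : Convex ℝ P)
    (hP₁ : IsCompact P₁) (hP₁conv : Convex ℝ P₁) (hP₁int : (interior P₁).Nonempty)
    (hP₂ : IsCompact P₂) (hP₂conv : Convex ℝ P₂) (hP₂int : (interior P₂).Nonempty)
    (hunion : P = P₁ ∪ P₂) (hdisj : Disjoint (interior P₁) (interior P₂))
    (hfin₁ : (Set.extremePoints ℝ P₁).Finite)
    (hfin₂ : (Set.extremePoints ℝ P₂).Finite)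
    (hk₀ : (Set.extremePoints ℝ P).ncard = k₀)
    (hk₁ : (Set.extremePoints ℝ P₁).ncard = k₁)
    (hk₂ : (Set.extremePoints ℝ P₂).ncard = k₂) :
    (k₁ + k₂ = k₀ + 2 ∨ k₁ + k₂ = k₀ + 3 ∨ k₁ + k₂ = k₀ + 4) ∧
    2 * min k₁ k₂ ≤ k₀ + 4 ∧
    (5 ≤ k₀ → min k₁ k₂ < k₀) := by
  obtain ⟨f, hf, w, hw, hP₁eq, hP₂eq⟩ := exists_eq_inter_halfSpaces_of_disjoint_interior hPconv
    hunion hP₁.isClosed hP₁conv hP₁int hP₂.isClosed hP₂conv hP₂int hdisj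
  have hcut : P₁ ∩ P₂ = P ∩ {x | f x = f w} := by
    rw [hP₁eq, hP₂eq]
    ext
    simp only [mem_inter_iff, mem_ofPred_eq]
    grind
  have hface₁ : IsExtreme ℝ P₁ (P₁ ∩ P₂) := by
    rw [hcut, hP₁eq]
    exact isExtreme_inter_setOf_eq P f.toLinearMap (f w)
  have hface₂ : IsExtreme ℝ P₂ (P₁ ∩ P₂) := by
    rw [hcut, hP₂eq]
    simpa using isExtreme_inter_setOf_eq P (-f.toLinearMap) (-f w)
  have htwo : ((P₁ ∩ P₂).extremePoints ℝ).ncard = 2 :=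
    hcut ▸ ncard_extremePoints_inter_level_set (by simp) hP hPconv hf hw
  have hbounds := ncard_add_ncard_bounds hfin₁ hfin₂
    (extremePoints_union_eq_of_isExtreme hPconv hunion hP₁.isClosed hP₂.isClosed hface₁)
    (extremePoints_inter_eq_of_isExtreme hface₁ hface₂)
  rw [hk₀, hk₁, hk₂, htwo] at hbounds
  omega

/-- If a compact convex set `P ⊆ ℝ²` with nonempty interior and exactly `k₀` extreme
points (`3 ≤ k₀ < ∞`) is split into two compact convex sets `P₁, P₂` with nonempty
interiors, disjoint interiors and exactly `k₁` resp. `k₂` extreme points, then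
`k₁ + k₂ ∈ {k₀+2, k₀+3, k₀+4}`; in particular `2·min{k₁,k₂} ≤ k₀ + 4`, so if
`k₀ ≥ 5` then `min{k₁,k₂} < k₀`. -/
theorem glass_cut_vertex_count (P P₁ P₂ : Set (ℝ × ℝ)) (k₀ k₁ k₂ : ℕ)
    (hP : IsCompact P) (hPconv : Convex ℝ P) (hPint : (interior P).Nonempty)
    (hP₁ : IsCompact P₁) (hP₁conv : Convex ℝ P₁) (hP₁int : (interior P₁).Nonempty)
    (hP₂ : IsCompact P₂) (hP₂conv : Convex ℝ P₂) (hP₂int : (interior P₂).Nonempty)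
    (hunion : P = P₁ ∪ P₂) (hdisj : Disjoint (interior P₁) (interior P₂))
    (hfin₀ : (Set.extremePoints ℝ P).Finite) (hfin₁ : (Set.extremePoints ℝ P₁).Finite)
    (hfin₂ : (Set.extremePoints ℝ P₂).Finite)
    (hk₀ : (Set.extremePoints ℝ P).ncard = k₀)
    (hk₁ : (Set.extremePoints ℝ P₁).ncard = k₁)
    (hk₂ : (Set.extremePoints ℝ P₂).ncard = k₂)
    (h3 : 3 ≤ k₀) :
    (k₁ + k₂ = k₀ + 2 ∨ k₁ + k₂ = k₀ + 3 ∨ k₁ + k₂ = k₀ + 4) ∧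
    2 * min k₁ k₂ ≤ k₀ + 4 ∧
    (5 ≤ k₀ → min k₁ k₂ < k₀) :=
  glass_cut_vertex_count_general P P₁ P₂ k₀ k₁ k₂ hP hPconv hP₁ hP₁conv hP₁int hP₂ hP₂conv hP₂int
    hunion hdisj hfin₁ hfin₂ hk₀ hk₁ hk₂
end
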